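/- arXiv:2505.00256 — 8 statements merged into one kernel-verified Lean document; each statement's English description precedes it below -/
import Mathlib

section
/- (Lemma 1, attainment of the dual supremum, case 0 < α < 1) For every α ∈ (0,1), set t** = inf{y ∈ ℝ : F(y) ≥ α} and t* = sup{y ∈ ℝ : F(y) ≤ α}. Then t** and t* are finite, t** ≤ t*, and for every η ∈ [t**, t*] one has (1/α)·E[(Y − η)₋] + η = (1/α)·∫₀^α F⁻¹(t) dt; in particular the supremum sup_{η ∈ ℝ} [(1/α)·E[(Y − η)₋] + η] is attained at the α-quantile η = F⁻¹(α). -/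
open MeasureTheory Set Filter ProbabilityTheory

/-- **Lemma 1 (attainment of the dual supremum, case `0 < α < 1`).**
With `t** = inf {y | F y ≥ α}` and `t* = sup {y | F y ≤ α}`, both are finite
(the defining sets are nonempty and suitably bounded), `t** ≤ t*`, the dual
objective `(1/α)·E[(Y − η)₋] + η` equals the `α`-expected welfare
`(1/α)·∫₀^α F⁻¹(t) dt` for every `η ∈ [t**, t*]`, and in particular the
supremum over `η ∈ ℝ` is attained at the `α`-quantile `η = F⁻¹(α)`. -/
theorem alpha_expected_welfare_dual_attained
    {Ω : Type*} [MeasurableSpace Ω] (P : Measure Ω) [IsProbabilityMeasure P]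
    (Y : Ω → ℝ) (hYmeas : Measurable Y) (hYint : Integrable Y P)
    (F : ℝ → ℝ) (hF : ∀ y, F y = (P {ω | Y ω ≤ y}).toReal)
    (Finv : ℝ → ℝ) (hFinv : ∀ t, Finv t = sInf {y : ℝ | t ≤ F y})
    (α : ℝ) (hα0 : 0 < α) (hα1 : α < 1) :
    ({y : ℝ | α ≤ F y}.Nonempty ∧ BddBelow {y : ℝ | α ≤ F y}) ∧
    ({y : ℝ | F y ≤ α}.Nonempty ∧ BddAbove {y : ℝ | F y ≤ α}) ∧
    sInf {y : ℝ | α ≤ F y} ≤ sSup {y : ℝ | F y ≤ α} ∧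
    (∀ η ∈ Set.Icc (sInf {y : ℝ | α ≤ F y}) (sSup {y : ℝ | F y ≤ α}),
      (1 / α) * ∫ ω, min (Y ω - η) 0 ∂P + η = (1 / α) * ∫ t in (0:ℝ)..α, Finv t) ∧
    (1 / α) * ∫ ω, min (Y ω - Finv α) 0 ∂P + Finv α
      = ⨆ η : ℝ, ((1 / α) * ∫ ω, min (Y ω - η) 0 ∂P + η) := by
  classical
  set μ : Measure ℝ := P.map Y with hμ
  haveI : IsProbabilityMeasure μ := Measure.isProbabilityMeasure_map hYmeas.aemeasurable
  have hFeq : F = ⇑(cdf μ) := by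
    funext y
    rw [hF, cdf_eq_real, Measure.real, hμ, Measure.map_apply hYmeas measurableSet_Iic]
    rfl
  subst hFeq
  have hFinveq : Finv = fun t => sInf {y : ℝ | t ≤ cdf μ y} := funext hFinv
  subst hFinveq
  set q : ℝ → ℝ := fun t => sInf {y : ℝ | t ≤ cdf μ y} with hq
  -- nonemptiness and boundedness facts
  have hne : ∀ t : ℝ, t < 1 → {y : ℝ | t ≤ cdf μ y}.Nonempty := by
    intro t ht
    obtain ⟨y, hy⟩ := ((tendsto_cdf_atTop μ).eventually_const_lt ht).exists
    exact ⟨y, hy.le⟩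
  have hbdd : ∀ t : ℝ, 0 < t → BddBelow {y : ℝ | t ≤ cdf μ y} := by
    intro t ht
    obtain ⟨y₀, hy₀⟩ := (((tendsto_cdf_atBot μ).eventually_lt_const ht)).exists_forall_of_atBot
    refine ⟨y₀, fun z hz => ?_⟩
    by_contra h
    push_neg at h
    exact absurd hz (not_le.2 (hy₀ z h.le))
  have hS2ne : {y : ℝ | cdf μ y ≤ α}.Nonempty := by
    obtain ⟨y₀, hy₀⟩ := ((tendsto_cdf_atBot μ).eventually_lt_const hα0).exists
    exact ⟨y₀, hy₀.le⟩
  have hS2bdd : BddAbove {y : ℝ | cdf μ y ≤ α} := by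
    obtain ⟨y₁, hy₁⟩ := (((tendsto_cdf_atTop μ).eventually_const_lt hα1)).exists_forall_of_atTop
    refine ⟨y₁, fun z hz => ?_⟩
    by_contra h
    push_neg at h
    exact absurd hz (not_le.2 (hy₁ z h.le))
  -- quantile basic facts
  have hq_mem : ∀ t : ℝ, 0 < t → t < 1 → t ≤ cdf μ (q t) := by
    intro t ht0 ht1
    rw [← (cdf μ).iInf_Ioi_eq (q t)]
    refine le_ciInf fun ⟨r, hr⟩ => ?_
    obtain ⟨z, hz, hzr⟩ := exists_lt_of_csInf_lt (hne t ht1) hr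
    exact hz.trans (monotone_cdf μ hzr.le)
  have hq_le_iff : ∀ t y : ℝ, 0 < t → t < 1 → (q t ≤ y ↔ t ≤ cdf μ y) := by
    intro t y ht0 ht1
    constructor
    · intro h
      exact (hq_mem t ht0 ht1).trans (monotone_cdf μ h)
    · intro h
      exact csInf_le (hbdd t ht0) h
  have hq_mono : MonotoneOn q (Ioo (0:ℝ) 1) := by
    intro a ha b hb hab
    exact csInf_le_csInf (hbdd a ha.1) (hne b hb.2) (fun y hy => le_trans hab hy)
  -- t** ≤ t*
  have htt : sInf {y : ℝ | α ≤ cdf μ y} ≤ sSup {y : ℝ | cdf μ y ≤ α} := by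
    by_contra h
    push_neg at h
    obtain ⟨x, hx1, hx2⟩ := exists_between h
    have hxS2 : x ∈ {y : ℝ | cdf μ y ≤ α} := by
      by_contra hc
      simp only [mem_setOf_eq, not_le] at hc
      exact absurd (csInf_le (hbdd α hα0) hc.le) (not_le.2 hx2)
    exact absurd (le_csSup hS2bdd hxS2) (not_le.2 hx1)
  -- measure preservation: (volume.restrict (Ioo 0 1)).map q = μ
  have hqae : AEMeasurable q (volume.restrict (Ioo (0:ℝ) 1)) :=
    aemeasurable_restrict_of_monotoneOn measurableSet_Ioo hq_mono
  have hmap : (volume.restrict (Ioo (0:ℝ) 1)).map q = μ := by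
    refine Measure.ext_of_Iic _ _ fun y => ?_
    rw [Measure.map_apply_of_aemeasurable hqae measurableSet_Iic,
      Measure.restrict_apply' measurableSet_Ioo]
    have hset : q ⁻¹' Iic y ∩ Ioo (0:ℝ) 1 = Iic (cdf μ y) ∩ Ioo (0:ℝ) 1 := by
      ext t
      simp only [mem_inter_iff, mem_preimage, mem_Iic, mem_Ioo, and_congr_left_iff]
      intro ht
      exact hq_le_iff t y ht.1 ht.2
    rw [hset, ← ofReal_cdf]
    have h0 : (0:ℝ) ≤ cdf μ y := cdf_nonneg μ y
    have h1 : cdf μ y ≤ 1 := cdf_le_one μ y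
    refine le_antisymm ?_ ?_
    · have : Iic (cdf μ y) ∩ Ioo (0:ℝ) 1 ⊆ Ioc 0 (cdf μ y) := fun t ht => ⟨ht.2.1, ht.1⟩
      calc volume (Iic (cdf μ y) ∩ Ioo (0:ℝ) 1) ≤ volume (Ioc 0 (cdf μ y)) := measure_mono this
        _ = ENNReal.ofReal (cdf μ y) := by rw [Real.volume_Ioc, sub_zero]
    · have : Ioo (0:ℝ) (cdf μ y) ⊆ Iic (cdf μ y) ∩ Ioo (0:ℝ) 1 :=
        fun t ht => ⟨ht.2.le, ht.1, lt_of_lt_of_le ht.2 h1⟩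
      calc ENNReal.ofReal (cdf μ y) = volume (Ioo (0:ℝ) (cdf μ y)) := by
            rw [Real.volume_Ioo, sub_zero]
        _ ≤ volume (Iic (cdf μ y) ∩ Ioo (0:ℝ) 1) := measure_mono this
  -- integral transfer
  have htransfer : ∀ g : ℝ → ℝ, AEStronglyMeasurable g μ →
      ∫ ω, g (Y ω) ∂P = ∫ t in Ioo (0:ℝ) 1, g (q t) := by
    intro g hg
    have h1 : ∫ ω, g (Y ω) ∂P = ∫ x, g x ∂μ :=
      (integral_map hYmeas.aemeasurable (by rwa [← hμ])).symm
    have h2 : ∫ x, g x ∂((volume.restrict (Ioo (0:ℝ) 1)).map q)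
        = ∫ t in Ioo (0:ℝ) 1, g (q t) :=
      integral_map hqae (by rwa [hmap])
    rw [h1, ← hmap, h2]
  -- integrability of q on (0,1)
  have hqint : IntegrableOn q (Ioo (0:ℝ) 1) volume := by
    have hidμ : Integrable (id : ℝ → ℝ) μ := by
      rw [hμ, integrable_map_measure aestronglyMeasurable_id hYmeas.aemeasurable]
      exact hYint
    rw [← hmap] at hidμ
    exact (integrable_map_measure aestronglyMeasurable_id hqae).mp hidμ
  have hIocsub : Ioc (0:ℝ) α ⊆ Ioo (0:ℝ) 1 := fun t ht => ⟨ht.1, lt_of_le_of_lt ht.2 hα1⟩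
  have hqintIoc : IntegrableOn q (Ioc (0:ℝ) α) volume := hqint.mono_set hIocsub
  have hmin_int : ∀ η : ℝ, IntegrableOn (fun t => min (q t - η) 0) (Ioo (0:ℝ) 1) volume := by
    intro η
    have heq : (fun t => min (q t - η) 0) = fun t => ((q t - η) - |q t - η|) / 2 := by
      funext t
      rcases le_total (q t - η) 0 with h | h
      · rw [min_eq_left h, abs_of_nonpos h]; ring
      · rw [min_eq_right h, abs_of_nonneg h]; ring
    rw [heq]
    exact (((hqint.sub (integrableOn_const (by simp))).sub
      (hqint.sub (integrableOn_const (by simp))).abs).div_const 2)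
  have hmin_intIoc : ∀ η : ℝ, IntegrableOn (fun t => min (q t - η) 0) (Ioc (0:ℝ) α) volume :=
    fun η => (hmin_int η).mono_set hIocsub
  have hαmem : α ∈ Ioo (0:ℝ) 1 := ⟨hα0, hα1⟩
  -- value of ∫ over Ioc 0 α of q t - η
  have hconst_int : ∀ η : ℝ, IntegrableOn (fun _ : ℝ => η) (Ioc (0:ℝ) α) volume :=
    fun η => integrableOn_const (by simp [Real.volume_Ioc])
  have hIocval : ∀ η : ℝ, ∫ t in Ioc (0:ℝ) α, (q t - η) = (∫ t in Ioc (0:ℝ) α, q t) - α * η := by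
    intro η
    rw [integral_sub hqintIoc (hconst_int η), setIntegral_const, Real.volume_real_Ioc_of_le hα0.le, sub_zero,
      smul_eq_mul]
  -- the q t ≥ η bound on (α, 1) for η ≤ t*
  have hq_ge : ∀ η t : ℝ, η ≤ sSup {y : ℝ | cdf μ y ≤ α} → t ∈ Ioo α 1 → η ≤ q t := by
    intro η t hη ht
    by_contra h
    push_neg at h
    obtain ⟨z, hz, hqz⟩ := exists_lt_of_lt_csSup hS2ne (lt_of_lt_of_le h hη)
    have h1 : t ≤ cdf μ (q t) := hq_mem t (hα0.trans ht.1) ht.2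
    have h2 : cdf μ (q t) ≤ cdf μ z := monotone_cdf μ hqz.le
    have : t ≤ α := h1.trans (h2.trans hz)
    exact absurd this (not_le.2 ht.1)
  -- splitting of the integral over (0,1)
  have hsplit : ∀ η : ℝ, ∫ t in Ioo (0:ℝ) 1, min (q t - η) 0
      = (∫ t in Ioc (0:ℝ) α, min (q t - η) 0) + ∫ t in Ioo α 1, min (q t - η) 0 := by
    intro η
    rw [← Set.Ioc_union_Ioo_eq_Ioo hα0.le hα1]
    exact setIntegral_union (by
        rw [Set.disjoint_left]
        rintro t ⟨_, h1⟩ ⟨h2, _⟩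
        exact absurd h2 (not_lt.2 h1)) measurableSet_Ioo
      (hmin_intIoc η) ((hmin_int η).mono_set (fun t ht => ⟨hα0.trans ht.1, ht.2⟩))
  -- main identity for η ∈ [t**, t*]
  have hmain : ∀ η : ℝ, q α ≤ η → η ≤ sSup {y : ℝ | cdf μ y ≤ α} →
      ∫ t in Ioo (0:ℝ) 1, min (q t - η) 0 = (∫ t in Ioc (0:ℝ) α, q t) - α * η := by
    intro η hη1 hη2
    rw [hsplit η]
    have h1 : ∫ t in Ioc (0:ℝ) α, min (q t - η) 0 = ∫ t in Ioc (0:ℝ) α, (q t - η) := by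
      refine setIntegral_congr_fun measurableSet_Ioc fun t ht => ?_
      have : q t ≤ η := le_trans (hq_mono (hIocsub ht) hαmem ht.2) hη1
      exact min_eq_left (by linarith)
    have h2 : ∫ t in Ioo α 1, min (q t - η) 0 = 0 := by
      rw [setIntegral_congr_fun measurableSet_Ioo (g := fun _ => (0:ℝ))
        (fun t ht => min_eq_right (by have := hq_ge η t hη2 ht; linarith))]
      simp
    rw [h1, h2, add_zero, hIocval η]
  -- the upper bound for every η
  have hub : ∀ η : ℝ, ∫ t in Ioo (0:ℝ) 1, min (q t - η) 0
      ≤ (∫ t in Ioc (0:ℝ) α, q t) - α * η := by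
    intro η
    rw [hsplit η, ← hIocval η]
    have h1 : ∫ t in Ioo α 1, min (q t - η) 0 ≤ 0 :=
      integral_nonpos fun t => min_le_right _ _
    have h2 : ∫ t in Ioc (0:ℝ) α, min (q t - η) 0 ≤ ∫ t in Ioc (0:ℝ) α, (q t - η) :=
      setIntegral_mono_on (hmin_intIoc η) (hqintIoc.sub (hconst_int η)) measurableSet_Ioc
        (fun t _ => min_le_left _ _)
    linarith
  -- express the expectation via the quantile integral
  have hexp : ∀ η : ℝ, ∫ ω, min (Y ω - η) 0 ∂P = ∫ t in Ioo (0:ℝ) 1, min (q t - η) 0 := by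
    intro η
    exact htransfer (fun x => min (x - η) 0)
      (((continuous_id.sub continuous_const).min continuous_const).aestronglyMeasurable)
  -- the interval integral of Finv
  have hFinvint : ∫ t in (0:ℝ)..α, q t = ∫ t in Ioc (0:ℝ) α, q t := by
    rw [intervalIntegral.integral_of_le hα0.le]
  -- the dual value
  set c : ℝ := (1 / α) * ∫ t in Ioc (0:ℝ) α, q t with hc
  have hval : ∀ η : ℝ, q α ≤ η → η ≤ sSup {y : ℝ | cdf μ y ≤ α} →
      (1 / α) * ∫ ω, min (Y ω - η) 0 ∂P + η = c := by
    intro η hη1 hη2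
    rw [hexp η, hmain η hη1 hη2, hc]
    field_simp
    ring
  have hle : ∀ η : ℝ, (1 / α) * ∫ ω, min (Y ω - η) 0 ∂P + η ≤ c := by
    intro η
    rw [hexp η, hc]
    have := mul_le_mul_of_nonneg_left (hub η) (le_of_lt (one_div_pos.2 hα0)) 
    have hαne : α ≠ 0 := hα0.ne'
    calc ((1 / α) * ∫ t in Ioo (0:ℝ) 1, min (q t - η) 0) + η
        ≤ (1 / α) * ((∫ t in Ioc (0:ℝ) α, q t) - α * η) + η := by linarith
      _ = (1 / α) * ∫ t in Ioc (0:ℝ) α, q t := by field_simp; ring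
  refine ⟨⟨hne α hα1, hbdd α hα0⟩, ⟨hS2ne, hS2bdd⟩, htt, ?_, ?_⟩
  · intro η hη
    rw [hFinvint]
    exact hval η hη.1 hη.2
  · have hqα : q α ∈ Set.Icc (q α) (sSup {y : ℝ | cdf μ y ≤ α}) := ⟨le_refl _, htt⟩
    have hvalα : (1 / α) * ∫ ω, min (Y ω - q α) 0 ∂P + q α = c := hval (q α) le_rfl htt
    have hsup : (⨆ η : ℝ, ((1 / α) * ∫ ω, min (Y ω - η) 0 ∂P + η)) = c := by
      refine le_antisymm (ciSup_le hle) ?_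
      rw [← hvalα]
      exact le_ciSup ⟨c, by rintro _ ⟨η, rfl⟩; exact hle η⟩ (q α)
    rw [hvalα, hsup]
end

section
/- (Theorem 1, inverse-propensity-weighting identification) Under unconfoundedness and strong overlap, for every η ∈ ℝ and every policy π, defining the weight w = A·π(X)/e(X) + (1 − A)·(1 − π(X))/(1 − e(X)) (composed with X and A), one has E[ w·(Y − η)₋ ] = E[(Y(π) − η)₋]. -/
open MeasureTheory

section IpwHelpers
open ProbabilityTheory Filter
open scoped ENNReal NNReal

lemma ipw_integrable_of_bound {Ω : Type*} [MeasurableSpace Ω] (P : Measure Ω)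
    [IsFiniteMeasure P] (f : Ω → ℝ) (hf : AEStronglyMeasurable f P) (C : ℝ)
    (h : ∀ ω, |f ω| ≤ C) : Integrable f P :=
  (integrable_const C).mono' hf (Filter.Eventually.of_forall fun ω => by
    simpa [Real.norm_eq_abs] using h ω)

lemma ipw_aux {Ω : Type*} {m : MeasurableSpace Ω} [mΩ : MeasurableSpace Ω]
    [StandardBorelSpace Ω] [Nonempty Ω]
    (P : Measure Ω) [IsProbabilityMeasure P] (hm : m ≤ mΩ)
    (Z : Ω → ℝ × ℝ) (hZ : Measurable Z) (A : Ω → ℝ) (hA : Measurable A)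
    (hCI : ProbabilityTheory.CondIndepFun m hm Z A P)
    (t : Set ℝ) (ht : MeasurableSet t)
    (g : Ω → ℝ) (hg : Measurable[m] g) (hg0 : ∀ ω, 0 ≤ g ω) (C : ℝ) (hgC : ∀ ω, g ω ≤ C)
    (q : Ω → ℝ) (hq : Measurable[m] q) (hq0 : ∀ ω, 0 ≤ q ω) (hq1 : ∀ ω, q ω ≤ 1)
    (hqver : q =ᵐ[P] P[Set.indicator (A ⁻¹' t) (fun _ => (1:ℝ)) | m])
    (φ : ℝ × ℝ → ℝ) (hφ : Measurable φ) (hint : Integrable (fun ω => φ (Z ω)) P) :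
    ∫ ω, Set.indicator (A ⁻¹' t) (fun _ => (1:ℝ)) ω * (g ω * φ (Z ω)) ∂P
      = ∫ ω, q ω * (g ω * φ (Z ω)) ∂P := by
  have hgm : Measurable g := hg.mono hm le_rfl
  have hqm : Measurable q := hq.mono hm le_rfl
  have hC0 : 0 ≤ C := le_trans (hg0 (Classical.arbitrary Ω)) (hgC _)
  have hT : MeasurableSet (A ⁻¹' t) := hA ht
  have hindT : ∀ ω, 0 ≤ Set.indicator (A ⁻¹' t) (fun _ => (1:ℝ)) ω ∧
      Set.indicator (A ⁻¹' t) (fun _ => (1:ℝ)) ω ≤ 1 := by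
    intro ω; unfold Set.indicator; split <;> norm_num
  -- the key identity at the level of sets
  have key : ∀ S : Set (ℝ × ℝ), MeasurableSet S →
      ∫ ω, Set.indicator (Z ⁻¹' S) (fun _ => (1:ℝ)) ω
          * (Set.indicator (A ⁻¹' t) (fun _ => (1:ℝ)) ω * g ω) ∂P
        = ∫ ω, Set.indicator (Z ⁻¹' S) (fun _ => (1:ℝ)) ω * (q ω * g ω) ∂P := by
    intro S hS
    have hU : MeasurableSet (Z ⁻¹' S) := hZ hS
    have hindU : ∀ ω, 0 ≤ Set.indicator (Z ⁻¹' S) (fun _ => (1:ℝ)) ω ∧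
        Set.indicator (Z ⁻¹' S) (fun _ => (1:ℝ)) ω ≤ 1 := by
      intro ω; unfold Set.indicator; split <;> norm_num
    have hprod := (ProbabilityTheory.condIndepFun_iff_condExp_inter_preimage_eq_mul
      hZ hA).mp hCI S t hS ht
    -- integrabilities
    have hint_inter : Integrable (Set.indicator (Z ⁻¹' S ∩ A ⁻¹' t) (fun _ => (1:ℝ))) P :=
      ipw_integrable_of_bound P _ ((measurable_const.indicator (hU.inter hT)).aestronglyMeasurable)
        1 (by intro ω; unfold Set.indicator; split <;> norm_num)
    have hint_gind : Integrable (fun ω => g ω *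
        Set.indicator (Z ⁻¹' S ∩ A ⁻¹' t) (fun _ => (1:ℝ)) ω) P :=
      ipw_integrable_of_bound P _ (hgm.aestronglyMeasurable.mul hint_inter.aestronglyMeasurable)
        C (by
          intro ω
          have h1 : 0 ≤ Set.indicator (Z ⁻¹' S ∩ A ⁻¹' t) (fun _ => (1:ℝ)) ω ∧
              Set.indicator (Z ⁻¹' S ∩ A ⁻¹' t) (fun _ => (1:ℝ)) ω ≤ 1 := by
            unfold Set.indicator; split <;> norm_num
          rw [abs_mul, abs_of_nonneg (hg0 ω), abs_of_nonneg h1.1]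
          calc g ω * _ ≤ g ω * 1 := by nlinarith [hg0 ω, h1.2]
            _ ≤ C := by simpa using hgC ω)
    have hint_U : Integrable (Set.indicator (Z ⁻¹' S) (fun _ => (1:ℝ))) P :=
      ipw_integrable_of_bound P _ ((measurable_const.indicator hU).aestronglyMeasurable)
        1 (by intro ω; unfold Set.indicator; split <;> norm_num)
    have hint_qgU : Integrable (fun ω => (q ω * g ω) *
        Set.indicator (Z ⁻¹' S) (fun _ => (1:ℝ)) ω) P :=
      ipw_integrable_of_bound P _ (((hqm.mul hgm).mul
        (measurable_const.indicator hU)).aestronglyMeasurable)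
        C (by
          intro ω
          rw [abs_mul, abs_mul, abs_of_nonneg (hq0 ω), abs_of_nonneg (hg0 ω),
            abs_of_nonneg (hindU ω).1]
          calc q ω * g ω * Set.indicator (Z ⁻¹' S) (fun _ => (1:ℝ)) ω
              ≤ q ω * g ω * 1 := by
                have := mul_nonneg (hq0 ω) (hg0 ω)
                nlinarith [(hindU ω).2]
            _ ≤ 1 * g ω * 1 := by nlinarith [hg0 ω, hq1 ω]
            _ ≤ C := by simpa using hgC ω)
    -- pull-out identities
    have e1 : P[fun ω => g ω * Set.indicator (Z ⁻¹' S ∩ A ⁻¹' t) (fun _ => (1:ℝ)) ω | m]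
        =ᵐ[P] fun ω => g ω * (P⟦Z ⁻¹' S ∩ A ⁻¹' t | m⟧) ω :=
      condExp_mul_of_stronglyMeasurable_left hg.stronglyMeasurable hint_gind hint_inter
    have e2 : P[fun ω => (q ω * g ω) * Set.indicator (Z ⁻¹' S) (fun _ => (1:ℝ)) ω | m]
        =ᵐ[P] fun ω => (q ω * g ω) * (P⟦Z ⁻¹' S | m⟧) ω :=
      condExp_mul_of_stronglyMeasurable_left ((hq.mul hg).stronglyMeasurable) hint_qgU hint_U
    calc ∫ ω, Set.indicator (Z ⁻¹' S) (fun _ => (1:ℝ)) ω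
          * (Set.indicator (A ⁻¹' t) (fun _ => (1:ℝ)) ω * g ω) ∂P
        = ∫ ω, g ω * Set.indicator (Z ⁻¹' S ∩ A ⁻¹' t) (fun _ => (1:ℝ)) ω ∂P := by
          refine integral_congr_ae (Filter.Eventually.of_forall fun ω => ?_)
          by_cases h1 : ω ∈ Z ⁻¹' S <;> by_cases h2 : ω ∈ A ⁻¹' t <;>
            simp [Set.indicator_apply, h1, h2]
      _ = ∫ ω, (P[fun ω => g ω * Set.indicator (Z ⁻¹' S ∩ A ⁻¹' t) (fun _ => (1:ℝ)) ω | m]) ω ∂P :=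
          (integral_condExp hm).symm
      _ = ∫ ω, (q ω * g ω) * (P⟦Z ⁻¹' S | m⟧) ω ∂P := by
          refine integral_congr_ae ?_
          filter_upwards [e1, hprod, hqver] with ω h1 h2 h3
          rw [h1, h2, ← h3]; ring
      _ = ∫ ω, (P[fun ω => (q ω * g ω) * Set.indicator (Z ⁻¹' S) (fun _ => (1:ℝ)) ω | m]) ω ∂P :=
          (integral_congr_ae e2).symm
      _ = ∫ ω, (q ω * g ω) * Set.indicator (Z ⁻¹' S) (fun _ => (1:ℝ)) ω ∂P :=
          integral_condExp hm
      _ = ∫ ω, Set.indicator (Z ⁻¹' S) (fun _ => (1:ℝ)) ω * (q ω * g ω) ∂P := by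
          simp_rw [mul_comm]
  -- densities and pushforward measures
  have hr1meas : Measurable (fun ω => Set.indicator (A ⁻¹' t) (fun _ => (1:ℝ)) ω * g ω) :=
    (measurable_const.indicator hT).mul hgm
  have hr2meas : Measurable (fun ω => q ω * g ω) := hqm.mul hgm
  have hr1nn : ∀ ω, 0 ≤ Set.indicator (A ⁻¹' t) (fun _ => (1:ℝ)) ω * g ω :=
    fun ω => mul_nonneg (hindT ω).1 (hg0 ω)
  have hr2nn : ∀ ω, 0 ≤ q ω * g ω := fun ω => mul_nonneg (hq0 ω) (hg0 ω)
  have hr1C : ∀ ω, Set.indicator (A ⁻¹' t) (fun _ => (1:ℝ)) ω * g ω ≤ C := by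
    intro ω
    calc Set.indicator (A ⁻¹' t) (fun _ => (1:ℝ)) ω * g ω ≤ 1 * g ω := by
          nlinarith [(hindT ω).1, (hindT ω).2, hg0 ω]
      _ ≤ C := by simpa using hgC ω
  have hr2C : ∀ ω, q ω * g ω ≤ C := by
    intro ω
    calc q ω * g ω ≤ 1 * g ω := by nlinarith [hq0 ω, hq1 ω, hg0 ω]
      _ ≤ C := by simpa using hgC ω
  have hd1 : Measurable (fun ω => Real.toNNReal
      (Set.indicator (A ⁻¹' t) (fun _ => (1:ℝ)) ω * g ω)) := hr1meas.real_toNNReal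
  have hd2 : Measurable (fun ω => Real.toNNReal (q ω * g ω)) := hr2meas.real_toNNReal
  have conv : ∀ (U : Set Ω), MeasurableSet U → ∀ (r : Ω → ℝ), Measurable r →
      (∀ ω, 0 ≤ r ω) → (∀ ω, r ω ≤ C) →
      ∫⁻ ω in U, ((Real.toNNReal (r ω)) : ℝ≥0∞) ∂P
        = ENNReal.ofReal (∫ ω in U, r ω ∂P) := by
    intro U hU r hr hr0 hrC
    have hint_r : Integrable r (P.restrict U) :=
      ipw_integrable_of_bound (P.restrict U) r hr.aestronglyMeasurable C
        (fun ω => by rw [abs_of_nonneg (hr0 ω)]; exact hrC ω)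
    have hco : ∀ ω, (((r ω).toNNReal : ℝ≥0) : ℝ≥0∞) = ENNReal.ofReal (r ω) := fun _ => rfl
    simp_rw [hco]
    rw [← ofReal_integral_eq_lintegral_ofReal hint_r
      (Filter.Eventually.of_forall fun ω => hr0 ω)]
  have hmap : (P.withDensity (fun ω => ((Real.toNNReal
        (Set.indicator (A ⁻¹' t) (fun _ => (1:ℝ)) ω * g ω)) : ℝ≥0∞))).map Z
      = (P.withDensity (fun ω => ((Real.toNNReal (q ω * g ω)) : ℝ≥0∞))).map Z := by
    refine Measure.ext fun S hS => ?_
    rw [Measure.map_apply hZ hS, Measure.map_apply hZ hS,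
      withDensity_apply _ (hZ hS), withDensity_apply _ (hZ hS),
      conv _ (hZ hS) _ hr1meas hr1nn hr1C, conv _ (hZ hS) _ hr2meas hr2nn hr2C]
    congr 1
    rw [← integral_indicator (hZ hS), ← integral_indicator (hZ hS)]
    have hkey := key S hS
    calc ∫ ω, Set.indicator (Z ⁻¹' S)
          (fun ω => Set.indicator (A ⁻¹' t) (fun _ => (1:ℝ)) ω * g ω) ω ∂P
        = ∫ ω, Set.indicator (Z ⁻¹' S) (fun _ => (1:ℝ)) ω
            * (Set.indicator (A ⁻¹' t) (fun _ => (1:ℝ)) ω * g ω) ∂P := by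
          refine integral_congr_ae (Filter.Eventually.of_forall fun ω => ?_)
          by_cases h1 : ω ∈ Z ⁻¹' S <;> simp [Set.indicator_apply, h1]
      _ = ∫ ω, Set.indicator (Z ⁻¹' S) (fun _ => (1:ℝ)) ω * (q ω * g ω) ∂P := hkey
      _ = ∫ ω, Set.indicator (Z ⁻¹' S) (fun ω => q ω * g ω) ω ∂P := by
          refine integral_congr_ae (Filter.Eventually.of_forall fun ω => ?_)
          by_cases h1 : ω ∈ Z ⁻¹' S <;> simp [Set.indicator_apply, h1]
  have h1 : ∫ ω, Set.indicator (A ⁻¹' t) (fun _ => (1:ℝ)) ω * (g ω * φ (Z ω)) ∂P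
      = ∫ y, φ y ∂((P.withDensity (fun ω => ((Real.toNNReal
          (Set.indicator (A ⁻¹' t) (fun _ => (1:ℝ)) ω * g ω)) : ℝ≥0∞))).map Z) := by
    rw [integral_map hZ.aemeasurable hφ.aestronglyMeasurable,
      integral_withDensity_eq_integral_smul hd1]
    refine integral_congr_ae (Filter.Eventually.of_forall fun ω => ?_)
    simp only [NNReal.smul_def, Real.coe_toNNReal _ (hr1nn ω), mul_assoc, smul_eq_mul]
  have h2 : ∫ ω, q ω * (g ω * φ (Z ω)) ∂P
      = ∫ y, φ y ∂((P.withDensity (fun ω =>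
          ((Real.toNNReal (q ω * g ω)) : ℝ≥0∞))).map Z) := by
    rw [integral_map hZ.aemeasurable hφ.aestronglyMeasurable,
      integral_withDensity_eq_integral_smul hd2]
    refine integral_congr_ae (Filter.Eventually.of_forall fun ω => ?_)
    simp only [NNReal.smul_def, Real.coe_toNNReal _ (hr2nn ω), mul_assoc, smul_eq_mul]
  rw [h1, h2, hmap]


end IpwHelpers

/-- **Theorem 1 (inverse-propensity-weighting identification).**
Under unconfoundedness (`(Y₀, Y₁) ⫫ A | σ(X)`) and strong overlap
(`κ ≤ e(x) ≤ 1 − κ` with `e∘X` a version of `E[A | σ(X)]`), for every `η ∈ ℝ` and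
every `{0,1}`-valued policy `π`, with
`w = A·π(X)/e(X) + (1 − A)·(1 − π(X))/(1 − e(X))` and `Y = A·Y₁ + (1 − A)·Y₀`,
one has `E[w·(Y − η)₋] = E[(Y(π) − η)₋]`. -/
theorem ipw_identification
    {Ω 𝒳 : Type*} [mΩ : MeasurableSpace Ω] [StandardBorelSpace Ω] [Nonempty Ω]
    [m𝒳 : MeasurableSpace 𝒳]
    (P : Measure Ω) [IsProbabilityMeasure P]
    (X : Ω → 𝒳) (hX : Measurable X)
    (Y0 Y1 A : Ω → ℝ) (hY0 : Integrable Y0 P) (hY1 : Integrable Y1 P)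
    (hA : Measurable A) (hA01 : ∀ ω, A ω = 0 ∨ A ω = 1)
    (hUnconf : ProbabilityTheory.CondIndepFun (m𝒳.comap X)
      (measurable_iff_comap_le.mp hX) (fun ω => (Y0 ω, Y1 ω)) A P)
    (κ : ℝ) (hκ0 : 0 < κ) (hκhalf : κ < 1 / 2)
    (e : 𝒳 → ℝ) (he : Measurable e) (hebound : ∀ x, κ ≤ e x ∧ e x ≤ 1 - κ)
    (hever : (fun ω => e (X ω)) =ᵐ[P] P[A | m𝒳.comap X]) :
    ∀ (η : ℝ) (π : 𝒳 → ℝ), Measurable π → (∀ x, π x = 0 ∨ π x = 1) →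
      ∫ ω, (A ω * π (X ω) / e (X ω) + (1 - A ω) * (1 - π (X ω)) / (1 - e (X ω)))
          * min ((A ω * Y1 ω + (1 - A ω) * Y0 ω) - η) 0 ∂P
        = ∫ ω, min ((π (X ω) * Y1 ω + (1 - π (X ω)) * Y0 ω) - η) 0 ∂P := by
  
  intro η π hπm hπ01
  have hm : m𝒳.comap X ≤ mΩ := measurable_iff_comap_le.mp hX
  have hXm : @Measurable Ω 𝒳 (m𝒳.comap X) m𝒳 X := measurable_iff_comap_le.mpr le_rfl
  -- basic facts about e and π
  have hepos : ∀ x, 0 < e x := fun x => lt_of_lt_of_le hκ0 (hebound x).1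
  have h1epos : ∀ x, 0 < 1 - e x := fun x => by
    have := (hebound x).2; linarith
  have hπ01' : ∀ x, 0 ≤ π x ∧ π x ≤ 1 := fun x => by
    rcases hπ01 x with h | h <;> simp [h] <;> norm_num
  -- measurable versions of Y0, Y1
  have h0 := hY0.aemeasurable
  have h1 := hY1.aemeasurable
  set Y0' : Ω → ℝ := h0.mk Y0 with hY0'def
  set Y1' : Ω → ℝ := h1.mk Y1 with hY1'def
  have hY0'm : Measurable Y0' := h0.measurable_mk
  have hY1'm : Measurable Y1' := h1.measurable_mk
  have hae0 : Y0 =ᵐ[P] Y0' := h0.ae_eq_mk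
  have hae1 : Y1 =ᵐ[P] Y1' := h1.ae_eq_mk
  set Z : Ω → ℝ × ℝ := fun ω => (Y0' ω, Y1' ω) with hZdef
  have hZ : Measurable Z := hY0'm.prodMk hY1'm
  -- transfer conditional independence to the measurable versions
  have haeZ : (fun ω => (Y0 ω, Y1 ω)) =ᵐ[P] Z := by
    filter_upwards [hae0, hae1] with ω e0 e1
    simp [hZdef, e0, e1]
  have hne : P {ω | ¬ (Y0 ω, Y1 ω) = Z ω} = 0 := ae_iff.mp haeZ
  obtain ⟨N, hNsub, hNmeas, hN0⟩ := exists_measurable_superset_of_null hne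
  have hker0 : ∀ᵐ a ∂(P.trim hm), ProbabilityTheory.condExpKernel P (m𝒳.comap X) a N = 0 := by
    have hk1 := ProbabilityTheory.condExpKernel_ae_eq_condExp (μ := P) hm hNmeas
    have hk2 : (P[Set.indicator N (fun ω => (1:ℝ)) | m𝒳.comap X]) =ᵐ[P] 0 := by
      have hzero : (Set.indicator N (fun _ => (1:ℝ))) =ᵐ[P] 0 := by
        have hnm : ∀ᵐ ω ∂P, ω ∉ N := by
          rw [ae_iff]; simpa [Set.setOf_mem_eq] using hN0
        filter_upwards [hnm] with ω hω
        simp [Set.indicator_apply, hω]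
      calc P[Set.indicator N (fun ω => (1:ℝ)) | m𝒳.comap X]
            =ᵐ[P] P[(0 : Ω → ℝ) | m𝒳.comap X] := condExp_congr_ae hzero
        _ = 0 := condExp_zero
    have hk3 : ∀ᵐ ω ∂P,
        (ProbabilityTheory.condExpKernel P (m𝒳.comap X) ω N).toReal = 0 := by
      filter_upwards [hk1, hk2] with ω ha hb
      rw [← measureReal_def, ha, hb]
      rfl
    have hmeas' : MeasurableSet[m𝒳.comap X]
        {ω | ProbabilityTheory.condExpKernel P (m𝒳.comap X) ω N = 0} :=
      ProbabilityTheory.measurable_condExpKernel hNmeas (measurableSet_singleton 0)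
    have hPset : P {ω | ¬ ProbabilityTheory.condExpKernel P (m𝒳.comap X) ω N = 0} = 0 := by
      rw [← ae_iff]
      filter_upwards [hk3] with ω hω
      have hnt : ProbabilityTheory.condExpKernel P (m𝒳.comap X) ω N ≠ ⊤ := measure_ne_top _ _
      exact ((ENNReal.toReal_eq_zero_iff _).mp hω).resolve_right hnt
    rw [ae_iff]
    have hcomp : {a | ¬ ProbabilityTheory.condExpKernel P (m𝒳.comap X) a N = 0}
        = {a | ProbabilityTheory.condExpKernel P (m𝒳.comap X) a N = 0}ᶜ := rfl
    rw [hcomp, trim_measurableSet_eq hm hmeas'.compl]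
    exact hPset
  have hCI : ProbabilityTheory.CondIndepFun (m𝒳.comap X) hm Z A P := by
    refine ProbabilityTheory.Kernel.IndepFun.congr' hUnconf ?_
      (Filter.Eventually.of_forall fun a => Filter.EventuallyEq.rfl)
    filter_upwards [hker0] with a ha
    exact ae_iff.mpr (measure_mono_null hNsub ha)
  -- weights and their properties
  set g1 : Ω → ℝ := fun ω => π (X ω) / e (X ω) with hg1def
  set g0 : Ω → ℝ := fun ω => (1 - π (X ω)) / (1 - e (X ω)) with hg0def
  have hg1m : Measurable[m𝒳.comap X] g1 := (hπm.comp hXm).div (he.comp hXm)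
  have hg0m : Measurable[m𝒳.comap X] g0 :=
    ((measurable_const.sub (hπm.comp hXm))).div (measurable_const.sub (he.comp hXm))
  have hg1nn : ∀ ω, 0 ≤ g1 ω := fun ω => div_nonneg (hπ01' (X ω)).1 (hepos (X ω)).le
  have hg0nn : ∀ ω, 0 ≤ g0 ω := fun ω =>
    div_nonneg (by linarith [(hπ01' (X ω)).2]) (h1epos (X ω)).le
  have hg1C : ∀ ω, g1 ω ≤ 1 / κ := fun ω =>
    div_le_div₀ zero_le_one (hπ01' (X ω)).2 hκ0 (hebound (X ω)).1
  have hg0C : ∀ ω, g0 ω ≤ 1 / κ := fun ω =>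
    div_le_div₀ zero_le_one (by linarith [(hπ01' (X ω)).1]) hκ0 (by linarith [(hebound (X ω)).2])
  -- conditional expectation versions
  have hq1m : Measurable[m𝒳.comap X] (fun ω => e (X ω)) := he.comp hXm
  have hq0m : Measurable[m𝒳.comap X] (fun ω => 1 - e (X ω)) :=
    measurable_const.sub (he.comp hXm)
  have hq1nn : ∀ ω, 0 ≤ e (X ω) := fun ω => (hepos (X ω)).le
  have hq1le : ∀ ω, e (X ω) ≤ 1 := fun ω => by linarith [(hebound (X ω)).2]
  have hq0nn : ∀ ω, 0 ≤ 1 - e (X ω) := fun ω => (h1epos (X ω)).le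
  have hq0le : ∀ ω, 1 - e (X ω) ≤ 1 := fun ω => by linarith [hq1nn ω]
  have hAint : Integrable A P :=
    ipw_integrable_of_bound P A hA.aestronglyMeasurable 1
      (fun ω => by rcases hA01 ω with h | h <;> simp [h])
  have hindA : Set.indicator (A ⁻¹' ({1} : Set ℝ)) (fun _ => (1:ℝ)) = A := by
    funext ω; rcases hA01 ω with h | h <;> simp [Set.indicator_apply, h]
  have hindA0 : Set.indicator (A ⁻¹' ({0} : Set ℝ)) (fun _ => (1:ℝ))
      = (fun _ => (1:ℝ)) - A := by
    funext ω; rcases hA01 ω with h | h <;> simp [Set.indicator_apply, h]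
  have hq1ver : (fun ω => e (X ω)) =ᵐ[P]
      P[Set.indicator (A ⁻¹' ({1} : Set ℝ)) (fun _ => (1:ℝ)) | m𝒳.comap X] := by
    rw [hindA]; exact hever
  have hq0ver : (fun ω => 1 - e (X ω)) =ᵐ[P]
      P[Set.indicator (A ⁻¹' ({0} : Set ℝ)) (fun _ => (1:ℝ)) | m𝒳.comap X] := by
    rw [hindA0]
    have hsub := condExp_sub (μ := P) (m := m𝒳.comap X) (integrable_const (1:ℝ)) hAint
    have hconst : P[(fun _ : Ω => (1:ℝ)) | m𝒳.comap X] = fun _ => (1:ℝ) :=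
      condExp_const hm (1:ℝ)
    filter_upwards [hsub, hever] with ω hs hev
    rw [hs, Pi.sub_apply, hconst, ← hev]
  -- the payoff functions
  set φ1 : ℝ × ℝ → ℝ := fun p => min (p.2 - η) 0 with hφ1def
  set φ0 : ℝ × ℝ → ℝ := fun p => min (p.1 - η) 0 with hφ0def
  have hφ1m : Measurable φ1 := (measurable_snd.sub measurable_const).min measurable_const
  have hφ0m : Measurable φ0 := (measurable_fst.sub measurable_const).min measurable_const
  have habs : ∀ a : ℝ, |min a 0| ≤ |a| := by
    intro a
    rcases le_total a 0 with h | h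
    · rw [min_eq_left h]
    · rw [min_eq_right h]; simp [abs_nonneg]
  have hφ1int : Integrable (fun ω => φ1 (Z ω)) P := by
    have hY1'int : Integrable (fun ω => Y1' ω - η) P :=
      (hY1.congr hae1).sub (integrable_const η)
    refine hY1'int.mono (((hY1'm.sub measurable_const).min
      measurable_const).aestronglyMeasurable) (Filter.Eventually.of_forall fun ω => ?_)
    simpa [Real.norm_eq_abs, hφ1def, hZdef] using habs (Y1' ω - η)
  have hφ0int : Integrable (fun ω => φ0 (Z ω)) P := by
    have hY0'int : Integrable (fun ω => Y0' ω - η) P :=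
      (hY0.congr hae0).sub (integrable_const η)
    refine hY0'int.mono (((hY0'm.sub measurable_const).min
      measurable_const).aestronglyMeasurable) (Filter.Eventually.of_forall fun ω => ?_)
    simpa [Real.norm_eq_abs, hφ0def, hZdef] using habs (Y0' ω - η)
  -- integrability of the four terms
  have hg1ma : Measurable g1 := hg1m.mono hm le_rfl
  have hg0ma : Measurable g0 := hg0m.mono hm le_rfl
  have hT1 : MeasurableSet (A ⁻¹' ({1} : Set ℝ)) := hA (measurableSet_singleton 1)
  have hT0 : MeasurableSet (A ⁻¹' ({0} : Set ℝ)) := hA (measurableSet_singleton 0)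
  have hindbd : ∀ (T : Set Ω) (ω : Ω), 0 ≤ Set.indicator T (fun _ => (1:ℝ)) ω ∧
      Set.indicator T (fun _ => (1:ℝ)) ω ≤ 1 := by
    intro T ω; unfold Set.indicator; split <;> norm_num
  have hbd1 : ∀ ω, ‖Set.indicator (A ⁻¹' ({1} : Set ℝ)) (fun _ => (1:ℝ)) ω * g1 ω‖
      ≤ 1 / κ := by
    intro ω
    rw [Real.norm_eq_abs, abs_mul, abs_of_nonneg (hindbd _ ω).1, abs_of_nonneg (hg1nn ω)]
    calc _ ≤ 1 * g1 ω := by nlinarith [(hindbd (A ⁻¹' ({1}:Set ℝ)) ω).2, hg1nn ω]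
      _ ≤ 1 / κ := by simpa using hg1C ω
  have hbd0 : ∀ ω, ‖Set.indicator (A ⁻¹' ({0} : Set ℝ)) (fun _ => (1:ℝ)) ω * g0 ω‖
      ≤ 1 / κ := by
    intro ω
    rw [Real.norm_eq_abs, abs_mul, abs_of_nonneg (hindbd _ ω).1, abs_of_nonneg (hg0nn ω)]
    calc _ ≤ 1 * g0 ω := by nlinarith [(hindbd (A ⁻¹' ({0}:Set ℝ)) ω).2, hg0nn ω]
      _ ≤ 1 / κ := by simpa using hg0C ω
  have hint1 : Integrable (fun ω => Set.indicator (A ⁻¹' ({1} : Set ℝ)) (fun _ => (1:ℝ)) ω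
      * (g1 ω * φ1 (Z ω))) P := by
    have := hφ1int.bdd_mul (((measurable_const.indicator hT1).mul
      hg1ma).aestronglyMeasurable) (c := 1 / κ) (Filter.Eventually.of_forall hbd1)
    simpa [mul_assoc] using this
  have hint0 : Integrable (fun ω => Set.indicator (A ⁻¹' ({0} : Set ℝ)) (fun _ => (1:ℝ)) ω
      * (g0 ω * φ0 (Z ω))) P := by
    have := hφ0int.bdd_mul (((measurable_const.indicator hT0).mul
      hg0ma).aestronglyMeasurable) (c := 1 / κ) (Filter.Eventually.of_forall hbd0)
    simpa [mul_assoc] using this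
  have hintR1 : Integrable (fun ω => π (X ω) * φ1 (Z ω)) P := by
    refine hφ1int.bdd_mul (hπm.comp hX).aestronglyMeasurable (c := 1) (Filter.Eventually.of_forall fun ω => ?_)
    have ha := (hπ01' (X ω)).1
    have hb := (hπ01' (X ω)).2
    simp only [Real.norm_eq_abs]
    rw [abs_of_nonneg ha]
    exact hb
  have hintR0 : Integrable (fun ω => (1 - π (X ω)) * φ0 (Z ω)) P := by
    refine hφ0int.bdd_mul (measurable_const.sub (hπm.comp hX)).aestronglyMeasurable
      (c := 1) (Filter.Eventually.of_forall fun ω => ?_)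
    have ha := (hπ01' (X ω)).1
    have hb := (hπ01' (X ω)).2
    simp only [Real.norm_eq_abs]
    rw [abs_of_nonneg (by linarith : (0:ℝ) ≤ 1 - π (X ω))]
    linarith
  -- decompose the left-hand side
  have hLHS : ∫ ω, (A ω * π (X ω) / e (X ω) + (1 - A ω) * (1 - π (X ω)) / (1 - e (X ω)))
        * min ((A ω * Y1 ω + (1 - A ω) * Y0 ω) - η) 0 ∂P
      = (∫ ω, Set.indicator (A ⁻¹' ({1} : Set ℝ)) (fun _ => (1:ℝ)) ω
          * (g1 ω * φ1 (Z ω)) ∂P)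
        + ∫ ω, Set.indicator (A ⁻¹' ({0} : Set ℝ)) (fun _ => (1:ℝ)) ω
          * (g0 ω * φ0 (Z ω)) ∂P := by
    rw [← integral_add hint1 hint0]
    refine integral_congr_ae ?_
    filter_upwards [hae0, hae1] with ω e0 e1
    rcases hA01 ω with h | h <;>
      simp [Set.indicator_apply, h, hg1def, hg0def, hφ1def, hφ0def, hZdef, e0, e1] <;> ring
  -- decompose the right-hand side
  have hRHS : ∫ ω, min ((π (X ω) * Y1 ω + (1 - π (X ω)) * Y0 ω) - η) 0 ∂P
      = (∫ ω, π (X ω) * φ1 (Z ω) ∂P) + ∫ ω, (1 - π (X ω)) * φ0 (Z ω) ∂P := by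
    rw [← integral_add hintR1 hintR0]
    refine integral_congr_ae ?_
    filter_upwards [hae0, hae1] with ω e0 e1
    rcases hπ01 (X ω) with h | h <;>
      simp [h, hφ1def, hφ0def, hZdef, e0, e1]
  -- apply the identification lemma to both terms
  have haux1 := ipw_aux P hm Z hZ A hA hCI ({1} : Set ℝ) (measurableSet_singleton 1)
    g1 hg1m hg1nn (1 / κ) hg1C (fun ω => e (X ω)) hq1m hq1nn hq1le hq1ver φ1 hφ1m hφ1int
  have haux0 := ipw_aux P hm Z hZ A hA hCI ({0} : Set ℝ) (measurableSet_singleton 0)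
    g0 hg0m hg0nn (1 / κ) hg0C (fun ω => 1 - e (X ω)) hq0m hq0nn hq0le hq0ver φ0 hφ0m hφ0int
  have hsimp1 : ∫ ω, e (X ω) * (g1 ω * φ1 (Z ω)) ∂P = ∫ ω, π (X ω) * φ1 (Z ω) ∂P := by
    refine integral_congr_ae (Filter.Eventually.of_forall fun ω => ?_)
    have hne' : e (X ω) ≠ 0 := (hepos (X ω)).ne'
    rw [hg1def]
    field_simp
  have hsimp0 : ∫ ω, (1 - e (X ω)) * (g0 ω * φ0 (Z ω)) ∂P
      = ∫ ω, (1 - π (X ω)) * φ0 (Z ω) ∂P := by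
    refine integral_congr_ae (Filter.Eventually.of_forall fun ω => ?_)
    have hne' : (1 : ℝ) - e (X ω) ≠ 0 := (h1epos (X ω)).ne'
    rw [hg0def]
    field_simp
  rw [hLHS, hRHS, haux1, haux0, hsimp1, hsimp0]
end

section
/- (Key conditional-expectation step in the proof of Theorem 1) Under unconfoundedness, for every η ∈ ℝ, E[ A·(Y − η)₋ | σ(X) ] = (e∘X)·μ₁(X, η) P-almost surely, where e∘X is a version of E[A | σ(X)] and μ₁(X, η) is a version of E[(Y₁ − η)₋ | σ(X)]. -/
open MeasureTheory MeasurableSpace ProbabilityTheory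

section Aux

variable {Ω : Type*} {m' : MeasurableSpace Ω} {mΩ : MeasurableSpace Ω} [StandardBorelSpace Ω]
  {μ : Measure Ω} [IsFiniteMeasure μ]

/-- If `f =ᵐ[μ] g` then for `μ.trim`-a.e. `ω`, `f =ᵐ[condExpKernel μ m' ω] g`. -/
lemma ae_trim_ae_eq_condExpKernel (hm' : m' ≤ mΩ) {β : Type*} {f g : Ω → β}
    (h : f =ᵐ[μ] g) :
    ∀ᵐ ω ∂(μ.trim hm'), f =ᵐ[condExpKernel μ m' ω] g := by
  obtain ⟨t, hsub, htm, ht0⟩ := exists_measurable_superset_of_null h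
  have h1 : (fun ω => (condExpKernel μ m' ω t).toReal) =ᵐ[μ] μ⟦t | m'⟧ :=
    condExpKernel_ae_eq_condExp hm' htm
  have h2 : (μ⟦t | m'⟧) =ᵐ[μ] 0 := by
    have hzero : (t.indicator (fun _ => (1:ℝ))) =ᵐ[μ] (0 : Ω → ℝ) := by
      have := measure_eq_zero_iff_ae_notMem.mp ht0
      filter_upwards [this] with ω hω
      simp [Set.indicator_of_notMem hω]
    calc μ⟦t | m'⟧ =ᵐ[μ] μ[(0 : Ω → ℝ) | m'] := condExp_congr_ae hzero
      _ = 0 := condExp_zero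
  have h3 : ∀ᵐ ω ∂μ, condExpKernel μ m' ω t = 0 := by
    filter_upwards [h1.trans h2] with ω hω
    have hne : condExpKernel μ m' ω t ≠ ⊤ := measure_ne_top _ _
    simpa [ENNReal.toReal_eq_zero_iff, hne] using hω
  have hmeas : MeasurableSet[m'] {ω | condExpKernel μ m' ω t = 0} := by
    have := measurable_condExpKernel (μ := μ) (m := m') htm
    exact this (measurableSet_singleton 0)
  have h4 : ∀ᵐ ω ∂(μ.trim hm'), condExpKernel μ m' ω t = 0 := by
    rw [ae_iff, trim_measurableSet_eq hm']
    · exact (ae_iff.mp h3)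
    · exact hmeas.compl
  filter_upwards [h4] with ω hω
  refine measure_mono_null ?_ hω
  intro x hx
  exact hsub hx

/-- Conditional independence of two real random variables implies a.e. independence
under the conditional expectation kernel. -/
lemma ae_indepFun_of_condIndepFun (hm' : m' ≤ mΩ) {f g : Ω → ℝ}
    (hf : Measurable f) (hg : Measurable g)
    (h : CondIndepFun m' hm' f g μ) :
    ∀ᵐ ω ∂μ, IndepFun f g (condExpKernel μ m' ω) := by
  have hq : ∀ᵐ ω ∂μ, ∀ q r : ℚ,
      condExpKernel μ m' ω (f ⁻¹' Set.Iic (q:ℝ) ∩ g ⁻¹' Set.Iic (r:ℝ))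
        = condExpKernel μ m' ω (f ⁻¹' Set.Iic (q:ℝ))
          * condExpKernel μ m' ω (g ⁻¹' Set.Iic (r:ℝ)) := by
    rw [ae_all_iff]; intro q; rw [ae_all_iff]; intro r
    exact ae_of_ae_trim hm'
      (h _ _ ⟨Set.Iic (q:ℝ), measurableSet_Iic, rfl⟩ ⟨Set.Iic (r:ℝ), measurableSet_Iic, rfl⟩)
  filter_upwards [hq] with ω hω
  set ν := condExpKernel μ m' ω with hν
  have : IsProbabilityMeasure ν := inferInstance
  have hSpi : IsPiSystem (⋃ a : ℚ, ({Set.Iic (a:ℝ)} : Set (Set ℝ))) :=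
    Real.isPiSystem_Iic_rat
  have hgen : ∀ (u : Ω → ℝ), MeasurableSpace.comap u (inferInstance : MeasurableSpace ℝ)
      = MeasurableSpace.generateFrom
        {s | ∃ t ∈ ⋃ a : ℚ, ({Set.Iic (a:ℝ)} : Set (Set ℝ)), u ⁻¹' t = s} := by
    intro u
    conv_lhs => rw [show (inferInstance : MeasurableSpace ℝ) = borel ℝ from rfl,
      Real.borel_eq_generateFrom_Iic_rat]
    rw [MeasurableSpace.comap_generateFrom]
    rfl
  refine IndepSets.indep (μ := ν) hf.comap_le hg.comap_le (hSpi.comap f) (hSpi.comap g)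
    (hgen f) (hgen g) ?_
  rw [IndepSets_iff]
  rintro t1 t2 ⟨s, hs, rfl⟩ ⟨t, ht, rfl⟩
  simp only [Set.mem_iUnion, Set.mem_singleton_iff] at hs ht
  obtain ⟨q, rfl⟩ := hs
  obtain ⟨r, rfl⟩ := ht
  exact hω q r

end Aux

/-- **Key conditional-expectation step in the proof of Theorem 1.**
Under unconfoundedness, for every `η ∈ ℝ`,
`E[A·(Y − η)₋ | σ(X)] = (e∘X)·μ₁(X, η)` `P`-almost surely, where `e∘X` is a version
of `E[A | σ(X)]`, `μ₁(X, η)` is a version of `E[(Y₁ − η)₋ | σ(X)]`, and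
`Y = A·Y₁ + (1 − A)·Y₀`. -/
theorem condexp_treated_score
    {Ω 𝒳 : Type*} [mΩ : MeasurableSpace Ω] [StandardBorelSpace Ω] [Nonempty Ω]
    [m𝒳 : MeasurableSpace 𝒳]
    (P : Measure Ω) [IsProbabilityMeasure P]
    (X : Ω → 𝒳) (hX : Measurable X)
    (Y0 Y1 A : Ω → ℝ) (hY0 : Integrable Y0 P) (hY1 : Integrable Y1 P)
    (hA : Measurable A) (hA01 : ∀ ω, A ω = 0 ∨ A ω = 1)
    (hUnconf : ProbabilityTheory.CondIndepFun (m𝒳.comap X)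
      (measurable_iff_comap_le.mp hX) (fun ω => (Y0 ω, Y1 ω)) A P)
    (e : 𝒳 → ℝ) (he : Measurable e)
    (hever : (fun ω => e (X ω)) =ᵐ[P] P[A | m𝒳.comap X])
    (μ1 : ℝ → 𝒳 → ℝ) (hμ1meas : ∀ η : ℝ, Measurable (μ1 η))
    (hμ1ver : ∀ η : ℝ,
      (fun ω => μ1 η (X ω)) =ᵐ[P] P[(fun ω => min (Y1 ω - η) 0) | m𝒳.comap X]) :
    ∀ η : ℝ,
      P[(fun ω => A ω * min ((A ω * Y1 ω + (1 - A ω) * Y0 ω) - η) 0) | m𝒳.comap X]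
        =ᵐ[P] fun ω => e (X ω) * μ1 η (X ω) := by
  intro η
  have hm' : m𝒳.comap X ≤ mΩ := measurable_iff_comap_le.mp hX
  -- measurable version of Y1
  set Y1' : Ω → ℝ := hY1.1.mk Y1 with hY1'def
  have hY1mk : Y1 =ᵐ[P] Y1' := hY1.1.ae_eq_mk
  have hY1'meas : Measurable Y1' := hY1.1.stronglyMeasurable_mk.measurable
  have hY1'int : Integrable Y1' P := hY1.congr hY1mk
  set f' : Ω → ℝ := fun ω => min (Y1' ω - η) 0 with hf'def
  have hf'meas : Measurable f' := (hY1'meas.sub measurable_const).min measurable_const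
  have hfeq : (fun ω => min (Y1 ω - η) 0) =ᵐ[P] f' := by
    filter_upwards [hY1mk] with ω hω
    simp [hf'def, hω]
  -- conditional independence of f' and A
  have hφ : Measurable fun p : ℝ × ℝ => min (p.2 - η) 0 :=
    (measurable_snd.sub measurable_const).min measurable_const
  have h1 : CondIndepFun (m𝒳.comap X) hm' (fun ω => min (Y1 ω - η) 0) A P :=
    hUnconf.comp hφ measurable_id
  have h2 : CondIndepFun (m𝒳.comap X) hm' f' A P := by
    refine ProbabilityTheory.Kernel.IndepFun.congr' h1
      (ae_trim_ae_eq_condExpKernel hm' hfeq) ?_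
    exact Filter.Eventually.of_forall fun ω => Filter.EventuallyEq.rfl
  have h3 : ∀ᵐ ω ∂P, IndepFun f' A (condExpKernel P (m𝒳.comap X) ω) :=
    ae_indepFun_of_condIndepFun hm' hf'meas hA h2
  -- integrability
  have habs : ∀ x : ℝ, |min x 0| ≤ |x| := by
    intro x
    rcases le_total x 0 with h | h
    · rw [min_eq_left h]
    · rw [min_eq_right h]; simpa using abs_nonneg x
  have hf'int : Integrable f' P := by
    refine (hY1'int.sub (integrable_const η)).mono hf'meas.aestronglyMeasurable ?_
    exact Filter.Eventually.of_forall fun ω => by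
      simpa [Real.norm_eq_abs] using habs (Y1' ω - η)
  have hAbd : ∀ ω, |A ω| ≤ 1 := fun ω => by rcases hA01 ω with h | h <;> simp [h]
  have hAint : Integrable A P := by
    refine (integrable_const (1:ℝ)).mono' hA.aestronglyMeasurable ?_
    exact Filter.Eventually.of_forall fun ω => by simpa [Real.norm_eq_abs] using hAbd ω
  have hAf'int : Integrable (fun ω => A ω * f' ω) P := by
    refine hf'int.abs.mono' (hA.mul hf'meas).aestronglyMeasurable ?_
    refine Filter.Eventually.of_forall fun ω => ?_
    simp only [Real.norm_eq_abs, abs_mul]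
    calc |A ω| * |f' ω| ≤ 1 * |f' ω| := by
          exact mul_le_mul_of_nonneg_right (hAbd ω) (abs_nonneg _)
      _ = |f' ω| := one_mul _
  -- the observed score equals A * f' a.e.
  have hgeq : (fun ω => A ω * min ((A ω * Y1 ω + (1 - A ω) * Y0 ω) - η) 0)
      =ᵐ[P] fun ω => A ω * f' ω := by
    filter_upwards [hY1mk] with ω hω
    rcases hA01 ω with h | h <;> simp [h, hf'def, hω]
  calc P[(fun ω => A ω * min ((A ω * Y1 ω + (1 - A ω) * Y0 ω) - η) 0) | m𝒳.comap X]
      =ᵐ[P] P[(fun ω => A ω * f' ω) | m𝒳.comap X] := condExp_congr_ae hgeq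
    _ =ᵐ[P] fun ω => ∫ y, A y * f' y ∂(condExpKernel P (m𝒳.comap X) ω) :=
        condExp_ae_eq_integral_condExpKernel hm' hAf'int
    _ =ᵐ[P] fun ω => (∫ y, A y ∂(condExpKernel P (m𝒳.comap X) ω))
          * ∫ y, f' y ∂(condExpKernel P (m𝒳.comap X) ω) := by
        filter_upwards [h3] with ω hω
        exact hω.symm.integral_fun_mul_eq_mul_integral hA.aestronglyMeasurable hf'meas.aestronglyMeasurable
    _ =ᵐ[P] fun ω => e (X ω) * μ1 η (X ω) := by
        have hAe : (fun ω => ∫ y, A y ∂(condExpKernel P (m𝒳.comap X) ω)) =ᵐ[P] fun ω => e (X ω) :=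
          (condExp_ae_eq_integral_condExpKernel hm' hAint).symm.trans hever.symm
        have hfμ : (fun ω => ∫ y, f' y ∂(condExpKernel P (m𝒳.comap X) ω)) =ᵐ[P]
            fun ω => μ1 η (X ω) := by
          refine (condExp_ae_eq_integral_condExpKernel hm' hf'int).symm.trans ?_
          exact (condExp_congr_ae hfeq.symm).trans (hμ1ver η).symm
        filter_upwards [hAe, hfμ] with ω h1' h2'
        rw [h1', h2']
end

section
/- (Double robustness of the score with respect to the outcome regressions, Section 3) Fix α ∈ (0,1], η ∈ ℝ, and a policy π. For any bounded measurable functions μ̌₀, μ̌₁ : 𝒳 → ℝ, define g : Ω → ℝ by g = (1/α)·[(1 − π(X))·μ̌₀(X) + π(X)·μ̌₁(X)] + η + (1/α)·[(1 − π(X))·(1 − A)/(1 − e(X))]·((Y − η)₋ − μ̌₀(X)) + (1/α)·[π(X)·A/e(X)]·((Y − η)₋ − μ̌₁(X)). Under unconfoundedness and strong overlap, E[g] = (1/α)·E[(Y(π) − η)₋] + η, regardless of the choice of μ̌₀, μ̌₁. -/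
open MeasureTheory
open ProbabilityTheory
open scoped ENNReal NNReal


section Aux
set_option linter.unusedSectionVars false
variable {Ω : Type*} {m : MeasurableSpace Ω} [mΩ : MeasurableSpace Ω]
  {P : Measure Ω} [IsProbabilityMeasure P]

lemma aux_int_of_bdd {f : Ω → ℝ} (hf : AEStronglyMeasurable f P) {C : ℝ}
    (h : ∀ ω, |f ω| ≤ C) : Integrable f P :=
  Integrable.mono' (integrable_const C) hf
    (Filter.Eventually.of_forall fun ω => by simpa [Real.norm_eq_abs] using h ω)

lemma aux_min_int {f : Ω → ℝ} (hf : Integrable f P) :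
    Integrable (fun ω => min (f ω) 0) P := by
  have h : (fun ω => min (f ω) 0) = fun ω => f ω - max (f ω) 0 := by
    funext ω; have := min_add_max (f ω) 0; linarith
  rw [h]; exact hf.sub hf.pos_part

lemma aux_condexp_factor (hm : m ≤ mΩ) {c g : Ω → ℝ}
    (hc : Measurable[m] c) {C : ℝ} (hcC : ∀ ω, |c ω| ≤ C)
    (hg : Integrable g P) :
    ∫ ω, c ω * g ω ∂P = ∫ ω, c ω * (P[g|m]) ω ∂P := by
  have hcsm : AEStronglyMeasurable c P :=
    ((hc.mono hm le_rfl).stronglyMeasurable).aestronglyMeasurable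
  have hint : Integrable (c * g) P :=
    hg.bdd_mul hcsm (Filter.Eventually.of_forall fun ω => by
      simpa [Real.norm_eq_abs] using hcC ω)
  calc ∫ ω, c ω * g ω ∂P = ∫ ω, (c * g) ω ∂P := rfl
    _ = ∫ ω, (P[c * g|m]) ω ∂P := (integral_condExp hm).symm
    _ = ∫ ω, (c * P[g|m]) ω ∂P :=
        integral_congr_ae (condExp_mul_of_stronglyMeasurable_left hc.stronglyMeasurable hint hg)
    _ = ∫ ω, c ω * (P[g|m]) ω ∂P := rfl

lemma aux_factor_condexp_eq (hm : m ≤ mΩ) {c g h : Ω → ℝ}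
    (hc : Measurable[m] c) {C : ℝ} (hcC : ∀ ω, |c ω| ≤ C)
    (hg : Integrable g P) (hgh : h =ᵐ[P] P[g|m]) :
    ∫ ω, c ω * g ω ∂P = ∫ ω, c ω * h ω ∂P := by
  rw [aux_condexp_factor hm hc hcC hg]
  refine integral_congr_ae ?_
  filter_upwards [hgh] with ω hω
  rw [hω]

end Aux

lemma aux_key {Ω : Type*} {m : MeasurableSpace Ω} [mΩ : MeasurableSpace Ω]
    [StandardBorelSpace Ω] [Nonempty Ω]
    (P : Measure Ω) [IsProbabilityMeasure P] (hm : m ≤ mΩ)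
    {β : Type*} [mβ : MeasurableSpace β] {W : Ω → β} (hW : Measurable W)
    {A : Ω → ℝ} (hA : Measurable A) (hA01 : ∀ ω, A ω = 0 ∨ A ω = 1)
    (hInd : ProbabilityTheory.CondIndepFun m hm W A P)
    {eX : Ω → ℝ} (heXm : Measurable[m] eX) (heX0 : ∀ ω, 0 ≤ eX ω) (heX1 : ∀ ω, eX ω ≤ 1)
    (hever : eX =ᵐ[P] P[A|m])
    {c : Ω → ℝ} (hc : Measurable[m] c) {C : ℝ} (hc0 : ∀ ω, 0 ≤ c ω) (hcC : ∀ ω, c ω ≤ C)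
    {φ : β → ℝ} (hφ : Measurable φ) :
    ∫ ω, c ω * A ω * φ (W ω) ∂P = ∫ ω, c ω * eX ω * φ (W ω) ∂P := by
  have hcΩ : Measurable c := hc.mono hm le_rfl
  have heXΩ : Measurable eX := heXm.mono hm le_rfl
  have hA0 : ∀ ω, 0 ≤ A ω := fun ω => by rcases hA01 ω with h | h <;> simp [h]
  have hA1 : ∀ ω, A ω ≤ 1 := fun ω => by rcases hA01 ω with h | h <;> simp [h]
  have hC0 : 0 ≤ C := le_trans (hc0 (Classical.arbitrary Ω)) (hcC _)
  have hcC' : ∀ ω, |c ω| ≤ C := fun ω => abs_le.mpr ⟨by linarith [hc0 ω], hcC ω⟩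
  have hceC : ∀ ω, |c ω * eX ω| ≤ C := fun ω => by
    rw [abs_mul, abs_of_nonneg (hc0 ω), abs_of_nonneg (heX0 ω)]
    calc c ω * eX ω ≤ C * 1 :=
          mul_le_mul (hcC ω) (heX1 ω) (heX0 ω) hC0
      _ = C := mul_one C
  have hce : Measurable[m] (fun ω => c ω * eX ω) := hc.mul heXm
  -- Step 1 : indicator version
  have hstep1 : ∀ t : Set β, MeasurableSet t →
      ∫ ω in W ⁻¹' t, c ω * A ω ∂P = ∫ ω in W ⁻¹' t, c ω * eX ω ∂P := by
    intro t ht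
    set s₁ : Set Ω := W ⁻¹' t with hs₁def
    have hs₁ : MeasurableSet s₁ := hW ht
    set s₂ : Set Ω := A ⁻¹' {(1:ℝ)} with hs₂def
    have hs₂ : MeasurableSet s₂ := hA (measurableSet_singleton 1)
    have hmem2 : ∀ ω, ω ∈ s₂ ↔ A ω = 1 := fun ω => Iff.rfl
    have hAind : ∀ ω, A ω = Set.indicator s₂ (fun _ => (1:ℝ)) ω := by
      intro ω
      by_cases h2 : ω ∈ s₂
      · rw [Set.indicator_of_mem h2]; exact (hmem2 ω).mp h2
      · rw [Set.indicator_of_notMem h2]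
        rcases hA01 ω with h | h
        · exact h
        · exact absurd ((hmem2 ω).mpr h) h2
    have hind_int : Integrable (Set.indicator (s₁ ∩ s₂) (fun _ => (1:ℝ))) P :=
      (integrable_const (1:ℝ)).indicator (hs₁.inter hs₂)
    have hind1 : Integrable (Set.indicator s₁ (fun _ => (1:ℝ))) P :=
      (integrable_const (1:ℝ)).indicator hs₁
    have e1 : ∫ ω in s₁, c ω * A ω ∂P
        = ∫ ω, c ω * Set.indicator (s₁ ∩ s₂) (fun _ => (1:ℝ)) ω ∂P := by
      rw [← integral_indicator hs₁]
      refine integral_congr_ae (Filter.Eventually.of_forall fun ω => ?_)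
      dsimp only
      by_cases h1 : ω ∈ s₁
      · rw [Set.indicator_of_mem h1]
        by_cases h2 : ω ∈ s₂
        · rw [Set.indicator_of_mem (Set.mem_inter h1 h2), (hmem2 ω).mp h2]
        · rw [Set.indicator_of_notMem (fun hmem => h2 (Set.mem_of_mem_inter_right hmem))]
          have hA0' : A ω = 0 := by
            rcases hA01 ω with h | h
            · exact h
            · exact absurd ((hmem2 ω).mpr h) h2
          rw [hA0']
      · rw [Set.indicator_of_notMem h1,
          Set.indicator_of_notMem (fun hmem => h1 (Set.mem_of_mem_inter_left hmem)), mul_zero]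
    have hCI := (ProbabilityTheory.condIndepFun_iff m hm W A hW hA P).mp hInd s₁ s₂
      ⟨t, ht, rfl⟩ ⟨{(1:ℝ)}, measurableSet_singleton 1, rfl⟩
    have hs₂e : (P⟦s₂|m⟧) =ᵐ[P] eX :=
      (condExp_congr_ae (Filter.Eventually.of_forall fun ω => (hAind ω).symm)).trans hever.symm
    have e3 : ∫ ω, c ω * (P[Set.indicator (s₁ ∩ s₂) (fun _ => (1:ℝ))|m]) ω ∂P
        = ∫ ω, (c ω * eX ω) * (P[Set.indicator s₁ (fun _ => (1:ℝ))|m]) ω ∂P := by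
      refine integral_congr_ae ?_
      filter_upwards [hCI, hs₂e] with ω h1 h2
      have h1' : (P⟦s₁ ∩ s₂|m⟧) ω = (P⟦s₁|m⟧) ω * (P⟦s₂|m⟧) ω := h1
      rw [h1', h2]
      ring
    have e5 : ∫ ω, (c ω * eX ω) * Set.indicator s₁ (fun _ => (1:ℝ)) ω ∂P
        = ∫ ω in s₁, c ω * eX ω ∂P := by
      rw [← integral_indicator hs₁]
      refine integral_congr_ae (Filter.Eventually.of_forall fun ω => ?_)
      dsimp only
      by_cases h1 : ω ∈ s₁
      · rw [Set.indicator_of_mem h1, Set.indicator_of_mem h1]; ring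
      · rw [Set.indicator_of_notMem h1, Set.indicator_of_notMem h1, mul_zero]
    calc ∫ ω in s₁, c ω * A ω ∂P
        = ∫ ω, c ω * Set.indicator (s₁ ∩ s₂) (fun _ => (1:ℝ)) ω ∂P := e1
      _ = ∫ ω, c ω * (P[Set.indicator (s₁ ∩ s₂) (fun _ => (1:ℝ))|m]) ω ∂P :=
          aux_condexp_factor hm hc hcC' hind_int
      _ = ∫ ω, (c ω * eX ω) * (P[Set.indicator s₁ (fun _ => (1:ℝ))|m]) ω ∂P := e3
      _ = ∫ ω, (c ω * eX ω) * Set.indicator s₁ (fun _ => (1:ℝ)) ω ∂P :=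
          (aux_condexp_factor hm hce hceC hind1).symm
      _ = ∫ ω in s₁, c ω * eX ω ∂P := e5
  -- Step 2 : extend to φ ∘ W via measures
  have hcA_nn : ∀ ω, 0 ≤ c ω * A ω := fun ω => mul_nonneg (hc0 ω) (hA0 ω)
  have hce_nn : ∀ ω, 0 ≤ c ω * eX ω := fun ω => mul_nonneg (hc0 ω) (heX0 ω)
  have hcA_int : Integrable (fun ω => c ω * A ω) P :=
    aux_int_of_bdd (hcΩ.mul hA).aestronglyMeasurable (C := C) (fun ω => by
      rw [abs_of_nonneg (hcA_nn ω)]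
      calc c ω * A ω ≤ C * 1 := mul_le_mul (hcC ω) (hA1 ω) (hA0 ω) hC0
        _ = C := mul_one C)
  have hce_int : Integrable (fun ω => c ω * eX ω) P :=
    aux_int_of_bdd (hcΩ.mul heXΩ).aestronglyMeasurable (C := C) (fun ω => hceC ω)
  set d₁ : Ω → ℝ≥0 := fun ω => Real.toNNReal (c ω * A ω) with hd₁def
  set d₂ : Ω → ℝ≥0 := fun ω => Real.toNNReal (c ω * eX ω) with hd₂def
  have hd₁m : Measurable d₁ := (hcΩ.mul hA).real_toNNReal
  have hd₂m : Measurable d₂ := (hcΩ.mul heXΩ).real_toNNReal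
  have hμeq : (P.withDensity (fun ω => (d₁ ω : ℝ≥0∞))).map W
      = (P.withDensity (fun ω => (d₂ ω : ℝ≥0∞))).map W := by
    ext t ht
    rw [Measure.map_apply hW ht, Measure.map_apply hW ht,
      withDensity_apply _ (hW ht), withDensity_apply _ (hW ht)]
    have l1 : ∫⁻ ω in W ⁻¹' t, ((d₁ ω : ℝ≥0∞)) ∂P
        = ENNReal.ofReal (∫ ω in W ⁻¹' t, c ω * A ω ∂P) := by
      rw [ofReal_integral_eq_lintegral_ofReal hcA_int.integrableOn
        (Filter.Eventually.of_forall hcA_nn)]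
      rfl
    have l2 : ∫⁻ ω in W ⁻¹' t, ((d₂ ω : ℝ≥0∞)) ∂P
        = ENNReal.ofReal (∫ ω in W ⁻¹' t, c ω * eX ω ∂P) := by
      rw [ofReal_integral_eq_lintegral_ofReal hce_int.integrableOn
        (Filter.Eventually.of_forall hce_nn)]
      rfl
    rw [l1, l2, hstep1 t ht]
  calc ∫ ω, c ω * A ω * φ (W ω) ∂P
      = ∫ ω, (d₁ ω : ℝ) • φ (W ω) ∂P := by
        refine integral_congr_ae (Filter.Eventually.of_forall fun ω => ?_)
        dsimp only [hd₁def]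
        rw [Real.coe_toNNReal _ (hcA_nn ω), smul_eq_mul]
    _ = ∫ y, φ y ∂((P.withDensity (fun ω => (d₁ ω : ℝ≥0∞))).map W) := by
        rw [integral_map hW.aemeasurable hφ.aestronglyMeasurable,
          integral_withDensity_eq_integral_smul hd₁m]
        rfl
    _ = ∫ y, φ y ∂((P.withDensity (fun ω => (d₂ ω : ℝ≥0∞))).map W) := by rw [hμeq]
    _ = ∫ ω, (d₂ ω : ℝ) • φ (W ω) ∂P := by
        rw [integral_map hW.aemeasurable hφ.aestronglyMeasurable,
          integral_withDensity_eq_integral_smul hd₂m]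
        rfl
    _ = ∫ ω, c ω * eX ω * φ (W ω) ∂P := by
        refine integral_congr_ae (Filter.Eventually.of_forall fun ω => ?_)
        dsimp only [hd₂def]
        rw [Real.coe_toNNReal _ (hce_nn ω), smul_eq_mul]

set_option maxHeartbeats 2000000 in
lemma main_meas {Ω 𝒳 : Type*} [mΩ : MeasurableSpace Ω] [StandardBorelSpace Ω] [Nonempty Ω]
    [m𝒳 : MeasurableSpace 𝒳]
    (P : Measure Ω) [IsProbabilityMeasure P]
    (X : Ω → 𝒳) (hX : Measurable X)
    (Y0 Y1 A : Ω → ℝ) (hY0m : Measurable Y0) (hY1m : Measurable Y1)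
    (hY0 : Integrable Y0 P) (hY1 : Integrable Y1 P)
    (hA : Measurable A) (hA01 : ∀ ω, A ω = 0 ∨ A ω = 1)
    (hUnconf : ProbabilityTheory.CondIndepFun (m𝒳.comap X)
      (measurable_iff_comap_le.mp hX) (fun ω => (Y0 ω, Y1 ω)) A P)
    (κ : ℝ) (hκ0 : 0 < κ) (hκhalf : κ < 1 / 2)
    (e : 𝒳 → ℝ) (he : Measurable e) (hebound : ∀ x, κ ≤ e x ∧ e x ≤ 1 - κ)
    (hever : (fun ω => e (X ω)) =ᵐ[P] P[A | m𝒳.comap X])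
    (α : ℝ) (hα0 : 0 < α) (η : ℝ)
    (π : 𝒳 → ℝ) (hπ : Measurable π) (hπ01 : ∀ x, π x = 0 ∨ π x = 1)
    (μ0c μ1c : 𝒳 → ℝ) (hμ0c : Measurable μ0c) (hμ1c : Measurable μ1c)
    (hμ0cbdd : ∃ C : ℝ, ∀ x, |μ0c x| ≤ C) (hμ1cbdd : ∃ C : ℝ, ∀ x, |μ1c x| ≤ C) :
    ∫ ω, ((1 / α) * ((1 - π (X ω)) * μ0c (X ω) + π (X ω) * μ1c (X ω)) + η
        + (1 / α) * ((1 - π (X ω)) * (1 - A ω) / (1 - e (X ω)))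
            * (min ((A ω * Y1 ω + (1 - A ω) * Y0 ω) - η) 0 - μ0c (X ω))
        + (1 / α) * (π (X ω) * A ω / e (X ω))
            * (min ((A ω * Y1 ω + (1 - A ω) * Y0 ω) - η) 0 - μ1c (X ω))) ∂P
      = (1 / α) * (∫ ω, min ((π (X ω) * Y1 ω + (1 - π (X ω)) * Y0 ω) - η) 0 ∂P) + η := by
  obtain ⟨C0, hC0⟩ := hμ0cbdd
  obtain ⟨C1, hC1⟩ := hμ1cbdd
  have hm : m𝒳.comap X ≤ mΩ := measurable_iff_comap_le.mp hX
  have hXm : @Measurable Ω 𝒳 (m𝒳.comap X) m𝒳 X := fun s hs => ⟨s, hs, rfl⟩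
  have hWm : Measurable (fun ω => (Y0 ω, Y1 ω)) := hY0m.prodMk hY1m
  have hBm : Measurable (fun ω => 1 - A ω) := measurable_const.sub hA
  have hB01 : ∀ ω, (1 - A ω) = 0 ∨ (1 - A ω) = 1 := fun ω => by
    rcases hA01 ω with h | h
    · right; rw [h]; ring
    · left; rw [h]; ring
  have hAint : Integrable A P := aux_int_of_bdd hA.aestronglyMeasurable (C := 1)
    (fun ω => by rcases hA01 ω with h | h <;> rw [h] <;> norm_num)
  have habs2 : ∀ x y X' Y' : ℝ, |x| ≤ X' → |y| ≤ Y' → |x * y| ≤ X' * Y' := by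
    intro x y X' Y' h1 h2
    rw [abs_mul]
    exact mul_le_mul h1 h2 (abs_nonneg _) (le_trans (abs_nonneg _) h1)
  -- elementary bounds
  have heb : ∀ x, 0 < e x ∧ e x < 1 ∧ κ ≤ 1 - e x := by
    intro x
    obtain ⟨h1, h2⟩ := hebound x
    refine ⟨lt_of_lt_of_le hκ0 h1, by linarith, by linarith⟩
  have hπb : ∀ x, 0 ≤ π x ∧ π x ≤ 1 := fun x => by
    rcases hπ01 x with h | h <;> rw [h] <;> norm_num
  have hKnn : 0 ≤ 1 / α * (1 / κ) := by positivity
  have hk0 : ∀ ω, 0 ≤ (1 / α * ((1 - π (X ω)) / (1 - e (X ω)))) ∧ (1 / α * ((1 - π (X ω)) / (1 - e (X ω)))) ≤ 1 / α * (1 / κ) := by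
    intro ω
    obtain ⟨he1, he2, he3⟩ := heb (X ω)
    obtain ⟨hp1, hp2⟩ := hπb (X ω)
    constructor
    · apply mul_nonneg (by positivity)
      exact div_nonneg (by linarith) (by linarith)
    · refine mul_le_mul_of_nonneg_left ?_ (by positivity)
      exact div_le_div₀ (by norm_num) (by linarith) hκ0 he3
  have hk1 : ∀ ω, 0 ≤ (1 / α * (π (X ω) / e (X ω))) ∧ (1 / α * (π (X ω) / e (X ω))) ≤ 1 / α * (1 / κ) := by
    intro ω
    obtain ⟨he1, he2, he3⟩ := heb (X ω)
    obtain ⟨hp1, hp2⟩ := hπb (X ω)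
    constructor
    · apply mul_nonneg (by positivity)
      exact div_nonneg hp1 (by linarith)
    · refine mul_le_mul_of_nonneg_left ?_ (by positivity)
      exact div_le_div₀ (by norm_num) hp2 hκ0 (hebound (X ω)).1
  have hb_c0 : ∀ ω, |(1 / α * ((1 - π (X ω)) / (1 - e (X ω))))| ≤ 1 / α * (1 / κ) := fun ω => by
    rw [abs_of_nonneg (hk0 ω).1]; exact (hk0 ω).2
  have hb_c1 : ∀ ω, |(1 / α * (π (X ω) / e (X ω)))| ≤ 1 / α * (1 / κ) := fun ω => by
    rw [abs_of_nonneg (hk1 ω).1]; exact (hk1 ω).2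
  have hb_A : ∀ ω, |A ω| ≤ 1 := fun ω => by
    rcases hA01 ω with h | h <;> rw [h] <;> norm_num
  have hb_B : ∀ ω, |1 - A ω| ≤ 1 := fun ω => by
    rcases hA01 ω with h | h <;> rw [h] <;> norm_num
  have hb_e : ∀ ω, |e (X ω)| ≤ 1 := fun ω => by
    obtain ⟨he1, he2, he3⟩ := heb (X ω)
    rw [abs_of_nonneg he1.le]; exact he2.le
  have hb_eB : ∀ ω, |1 - e (X ω)| ≤ 1 := fun ω => by
    obtain ⟨he1, he2, he3⟩ := heb (X ω)
    rw [abs_of_nonneg (by linarith)]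
    linarith [lt_of_lt_of_le hκ0 (hebound (X ω)).1]
  -- measurability (with respect to the comap σ-algebra)
  have hk0m : Measurable[m𝒳.comap X] (fun ω => (1 / α * ((1 - π (X ω)) / (1 - e (X ω))))) :=
    (measurable_const.mul ((measurable_const.sub hπ).div (measurable_const.sub he))).comp hXm
  have hk1m : Measurable[m𝒳.comap X] (fun ω => (1 / α * (π (X ω) / e (X ω)))) :=
    (measurable_const.mul (hπ.div he)).comp hXm
  have hk0μm : Measurable[m𝒳.comap X] (fun ω => (1 / α * ((1 - π (X ω)) / (1 - e (X ω)))) * μ0c (X ω)) :=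
    hk0m.mul (hμ0c.comp hXm)
  have hk1μm : Measurable[m𝒳.comap X] (fun ω => (1 / α * (π (X ω) / e (X ω))) * μ1c (X ω)) :=
    hk1m.mul (hμ1c.comp hXm)
  have heBmm : Measurable[m𝒳.comap X] (fun ω => 1 - e (X ω)) :=
    (measurable_const.sub he).comp hXm
  have heB0 : ∀ ω, 0 ≤ 1 - e (X ω) := fun ω => by
    obtain ⟨he1, he2, he3⟩ := heb (X ω); linarith
  have heB1 : ∀ ω, 1 - e (X ω) ≤ 1 := fun ω => by
    obtain ⟨he1, he2, he3⟩ := heb (X ω); linarith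
  have heemm : Measurable[m𝒳.comap X] (fun ω => e (X ω)) := he.comp hXm
  have hee0 : ∀ ω, 0 ≤ e (X ω) := fun ω => (heb (X ω)).1.le
  have hee1 : ∀ ω, e (X ω) ≤ 1 := fun ω => (heb (X ω)).2.1.le
  -- conditional independence for 1 - A
  have hIndB : ProbabilityTheory.CondIndepFun (m𝒳.comap X) hm
      (fun ω => (Y0 ω, Y1 ω)) (fun ω => 1 - A ω) P :=
    hUnconf.comp measurable_id (measurable_const.sub measurable_id)
  have hInd : ProbabilityTheory.CondIndepFun (m𝒳.comap X) hm
      (fun ω => (Y0 ω, Y1 ω)) A P := hUnconf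
  -- the version of E[1 - A | X]
  have heverB : (fun ω => 1 - e (X ω)) =ᵐ[P] P[((fun _ => (1:ℝ)) - A) | m𝒳.comap X] := by
    have hsub : P[((fun _ => (1:ℝ)) - A) | m𝒳.comap X]
        =ᵐ[P] P[(fun _ => (1:ℝ)) | m𝒳.comap X] - P[A | m𝒳.comap X] :=
      condExp_sub (integrable_const 1) hAint _
    have hconst : P[(fun _ => (1:ℝ)) | m𝒳.comap X] = fun _ => (1:ℝ) :=
      condExp_const hm (1:ℝ)
    filter_upwards [hsub, hever] with ω h1 h2
    rw [h1, Pi.sub_apply, hconst]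
    simp only
    rw [← h2]
  -- the min functions are measurable / integrable
  have hφ0 : Measurable (fun p : ℝ × ℝ => min (p.1 - η) 0) :=
    (measurable_fst.sub measurable_const).min measurable_const
  have hφ1 : Measurable (fun p : ℝ × ℝ => min (p.2 - η) 0) :=
    (measurable_snd.sub measurable_const).min measurable_const
  have hM0int : Integrable (fun ω => min (Y0 ω - η) 0) P :=
    aux_min_int (f := fun ω => Y0 ω - η) (hY0.sub (integrable_const η))
  have hM1int : Integrable (fun ω => min (Y1 ω - η) 0) P :=
    aux_min_int (f := fun ω => Y1 ω - η) (hY1.sub (integrable_const η))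
  have hRint : Integrable (fun ω => min ((π (X ω) * Y1 ω + (1 - π (X ω)) * Y0 ω) - η) 0) P := by
    refine aux_min_int (f := fun ω => π (X ω) * Y1 ω + (1 - π (X ω)) * Y0 ω - η) ?_
    refine Integrable.sub ?_ (integrable_const η)
    refine Integrable.add ?_ ?_
    · exact hY1.bdd_mul (c := 1) (hπ.comp hX).aestronglyMeasurable
        (Filter.Eventually.of_forall fun ω => by
          rw [Real.norm_eq_abs, abs_of_nonneg (hπb (X ω)).1]; exact (hπb (X ω)).2)
    · exact hY0.bdd_mul (c := 1) ((measurable_const.sub hπ).comp hX).aestronglyMeasurable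
        (Filter.Eventually.of_forall fun ω => by
          rw [Real.norm_eq_abs]
          obtain ⟨h1, h2⟩ := hπb (X ω)
          have h3 : (0:ℝ) ≤ 1 - π (X ω) := by linarith
          rw [abs_of_nonneg h3]; linarith)
  -- the four key integral identities
  have hu0eq : ∫ ω, (1 / α * ((1 - π (X ω)) / (1 - e (X ω)))) * (1 - A ω) * min (Y0 ω - η) 0 ∂P = ∫ ω, (1 / α * ((1 - π (X ω)) / (1 - e (X ω)))) * (1 - e (X ω)) * min (Y0 ω - η) 0 ∂P :=
    aux_key (W := fun ω => (Y0 ω, Y1 ω)) (φ := fun p : ℝ × ℝ => min (p.1 - η) 0)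
      P hm hWm hBm hB01 hIndB heBmm heB0 heB1 heverB hk0m
      (fun ω => (hk0 ω).1) (fun ω => (hk0 ω).2) hφ0
  have hu1eq : ∫ ω, (1 / α * (π (X ω) / e (X ω))) * A ω * min (Y1 ω - η) 0 ∂P = ∫ ω, (1 / α * (π (X ω) / e (X ω))) * e (X ω) * min (Y1 ω - η) 0 ∂P :=
    aux_key (W := fun ω => (Y0 ω, Y1 ω)) (φ := fun p : ℝ × ℝ => min (p.2 - η) 0)
      P hm hWm hA hA01 hInd heemm hee0 hee1 hever hk1m
      (fun ω => (hk1 ω).1) (fun ω => (hk1 ω).2) hφ1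
  have hC0nn : 0 ≤ C0 := le_trans (abs_nonneg _) (hC0 (X (Classical.arbitrary Ω)))
  have hC1nn : 0 ≤ C1 := le_trans (abs_nonneg _) (hC1 (X (Classical.arbitrary Ω)))
  have hBint : Integrable (fun ω => 1 - A ω) P := (integrable_const 1).sub hAint
  have hv0eq : ∫ ω, ((1 / α * ((1 - π (X ω)) / (1 - e (X ω)))) * μ0c (X ω)) * (1 - A ω) ∂P = ∫ ω, ((1 / α * ((1 - π (X ω)) / (1 - e (X ω)))) * μ0c (X ω)) * (1 - e (X ω)) ∂P :=
    aux_factor_condexp_eq hm hk0μm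
      (C := 1 / α * (1 / κ) * C0)
      (fun ω => habs2 _ _ _ _ (hb_c0 ω) (hC0 (X ω))) hBint heverB
  have hv1eq : ∫ ω, ((1 / α * (π (X ω) / e (X ω))) * μ1c (X ω)) * A ω ∂P = ∫ ω, ((1 / α * (π (X ω) / e (X ω))) * μ1c (X ω)) * e (X ω) ∂P :=
    aux_factor_condexp_eq hm hk1μm
      (C := 1 / α * (1 / κ) * C1)
      (fun ω => habs2 _ _ _ _ (hb_c1 ω) (hC1 (X ω))) hAint hever
  -- integrability of all the pieces
  have hk0am : AEStronglyMeasurable (fun ω => (1 / α * ((1 - π (X ω)) / (1 - e (X ω)))) * (1 - A ω)) P :=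
    (((hk0m.mono hm le_rfl)).mul hBm).aestronglyMeasurable
  have hk0em : AEStronglyMeasurable (fun ω => (1 / α * ((1 - π (X ω)) / (1 - e (X ω)))) * (1 - e (X ω))) P :=
    (((hk0m.mono hm le_rfl)).mul ((measurable_const.sub he).comp hX)).aestronglyMeasurable
  have hk1am : AEStronglyMeasurable (fun ω => (1 / α * (π (X ω) / e (X ω))) * A ω) P :=
    (((hk1m.mono hm le_rfl)).mul hA).aestronglyMeasurable
  have hk1em : AEStronglyMeasurable (fun ω => (1 / α * (π (X ω) / e (X ω))) * e (X ω)) P :=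
    (((hk1m.mono hm le_rfl)).mul (he.comp hX)).aestronglyMeasurable
  have hu0i : Integrable (fun ω => (1 / α * ((1 - π (X ω)) / (1 - e (X ω)))) * (1 - A ω) * min (Y0 ω - η) 0) P :=
    hM0int.bdd_mul hk0am (Filter.Eventually.of_forall fun ω => by
      rw [Real.norm_eq_abs]
      simpa using habs2 _ _ _ _ (hb_c0 ω) (hb_B ω))
  have hu0pi : Integrable (fun ω => (1 / α * ((1 - π (X ω)) / (1 - e (X ω)))) * (1 - e (X ω)) * min (Y0 ω - η) 0) P :=
    hM0int.bdd_mul hk0em (Filter.Eventually.of_forall fun ω => by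
      rw [Real.norm_eq_abs]
      simpa using habs2 _ _ _ _ (hb_c0 ω) (hb_eB ω))
  have hu1i : Integrable (fun ω => (1 / α * (π (X ω) / e (X ω))) * A ω * min (Y1 ω - η) 0) P :=
    hM1int.bdd_mul hk1am (Filter.Eventually.of_forall fun ω => by
      rw [Real.norm_eq_abs]
      simpa using habs2 _ _ _ _ (hb_c1 ω) (hb_A ω))
  have hu1pi : Integrable (fun ω => (1 / α * (π (X ω) / e (X ω))) * e (X ω) * min (Y1 ω - η) 0) P :=
    hM1int.bdd_mul hk1em (Filter.Eventually.of_forall fun ω => by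
      rw [Real.norm_eq_abs]
      simpa using habs2 _ _ _ _ (hb_c1 ω) (hb_e ω))
  have hv0i : Integrable (fun ω => ((1 / α * ((1 - π (X ω)) / (1 - e (X ω)))) * μ0c (X ω)) * (1 - A ω)) P :=
    aux_int_of_bdd ((((hk0μm.mono hm le_rfl)).mul hBm).aestronglyMeasurable)
      (C := 1 / α * (1 / κ) * C0 * 1)
      (fun ω => habs2 _ _ _ _ (habs2 _ _ _ _ (hb_c0 ω) (hC0 (X ω))) (hb_B ω))
  have hv0pi : Integrable (fun ω => ((1 / α * ((1 - π (X ω)) / (1 - e (X ω)))) * μ0c (X ω)) * (1 - e (X ω))) P :=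
    aux_int_of_bdd ((((hk0μm.mono hm le_rfl)).mul ((measurable_const.sub he).comp hX)).aestronglyMeasurable)
      (C := 1 / α * (1 / κ) * C0 * 1)
      (fun ω => habs2 _ _ _ _ (habs2 _ _ _ _ (hb_c0 ω) (hC0 (X ω))) (hb_eB ω))
  have hv1i : Integrable (fun ω => ((1 / α * (π (X ω) / e (X ω))) * μ1c (X ω)) * A ω) P :=
    aux_int_of_bdd ((((hk1μm.mono hm le_rfl)).mul hA).aestronglyMeasurable)
      (C := 1 / α * (1 / κ) * C1 * 1)
      (fun ω => habs2 _ _ _ _ (habs2 _ _ _ _ (hb_c1 ω) (hC1 (X ω))) (hb_A ω))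
  have hv1pi : Integrable (fun ω => ((1 / α * (π (X ω) / e (X ω))) * μ1c (X ω)) * e (X ω)) P :=
    aux_int_of_bdd ((((hk1μm.mono hm le_rfl)).mul (he.comp hX)).aestronglyMeasurable)
      (C := 1 / α * (1 / κ) * C1 * 1)
      (fun ω => habs2 _ _ _ _ (habs2 _ _ _ _ (hb_c1 ω) (hC1 (X ω))) (hb_e ω))
  -- pointwise identity
  have key_pt : ∀ ω, ((1 / α) * ((1 - π (X ω)) * μ0c (X ω) + π (X ω) * μ1c (X ω)) + η
        + (1 / α) * ((1 - π (X ω)) * (1 - A ω) / (1 - e (X ω)))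
            * (min ((A ω * Y1 ω + (1 - A ω) * Y0 ω) - η) 0 - μ0c (X ω))
        + (1 / α) * (π (X ω) * A ω / e (X ω))
            * (min ((A ω * Y1 ω + (1 - A ω) * Y0 ω) - η) 0 - μ1c (X ω)))
      = (1 / α * min ((π (X ω) * Y1 ω + (1 - π (X ω)) * Y0 ω) - η) 0 + η) + ((((1 / α * ((1 - π (X ω)) / (1 - e (X ω)))) * (1 - A ω) * min (Y0 ω - η) 0 - (1 / α * ((1 - π (X ω)) / (1 - e (X ω)))) * (1 - e (X ω)) * min (Y0 ω - η) 0) + (((1 / α * ((1 - π (X ω)) / (1 - e (X ω)))) * μ0c (X ω)) * (1 - e (X ω)) - ((1 / α * ((1 - π (X ω)) / (1 - e (X ω)))) * μ0c (X ω)) * (1 - A ω))) + (((1 / α * (π (X ω) / e (X ω))) * A ω * min (Y1 ω - η) 0 - (1 / α * (π (X ω) / e (X ω))) * e (X ω) * min (Y1 ω - η) 0) + (((1 / α * (π (X ω) / e (X ω))) * μ1c (X ω)) * e (X ω) - ((1 / α * (π (X ω) / e (X ω))) * μ1c (X ω)) * A ω))) := by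
    intro ω
    have he1 : e (X ω) ≠ 0 := ne_of_gt (heb (X ω)).1
    have he2 : (1:ℝ) - e (X ω) ≠ 0 := ne_of_gt (lt_of_lt_of_le hκ0 (heb (X ω)).2.2)
    have hz : ((0:ℝ) * Y1 ω + (1 - 0) * Y0 ω) = Y0 ω := by ring
    have ho : ((1:ℝ) * Y1 ω + (1 - 1) * Y0 ω) = Y1 ω := by ring
    rcases hA01 ω with hA' | hA' <;> rcases hπ01 (X ω) with hπ' | hπ' <;> rw [hA', hπ']
    · rw [hz]; field_simp; ring
    · rw [hz, ho]; field_simp; ring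
    · rw [ho, hz]; field_simp; ring
    · rw [ho]; field_simp; ring
  -- assemble
  have hd0a : Integrable (fun ω => (1 / α * ((1 - π (X ω)) / (1 - e (X ω)))) * (1 - A ω) * min (Y0 ω - η) 0 - (1 / α * ((1 - π (X ω)) / (1 - e (X ω)))) * (1 - e (X ω)) * min (Y0 ω - η) 0) P := hu0i.sub hu0pi
  have hd0b : Integrable (fun ω => ((1 / α * ((1 - π (X ω)) / (1 - e (X ω)))) * μ0c (X ω)) * (1 - e (X ω)) - ((1 / α * ((1 - π (X ω)) / (1 - e (X ω)))) * μ0c (X ω)) * (1 - A ω)) P := hv0pi.sub hv0i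
  have hd1a : Integrable (fun ω => (1 / α * (π (X ω) / e (X ω))) * A ω * min (Y1 ω - η) 0 - (1 / α * (π (X ω) / e (X ω))) * e (X ω) * min (Y1 ω - η) 0) P := hu1i.sub hu1pi
  have hd1b : Integrable (fun ω => ((1 / α * (π (X ω) / e (X ω))) * μ1c (X ω)) * e (X ω) - ((1 / α * (π (X ω) / e (X ω))) * μ1c (X ω)) * A ω) P := hv1pi.sub hv1i
  have hGint : Integrable (fun ω => (1 / α * min ((π (X ω) * Y1 ω + (1 - π (X ω)) * Y0 ω) - η) 0 + η)) P :=
    (hRint.const_mul (1 / α)).add (integrable_const η)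
  have hD0int : Integrable (fun ω => (((1 / α * ((1 - π (X ω)) / (1 - e (X ω)))) * (1 - A ω) * min (Y0 ω - η) 0 - (1 / α * ((1 - π (X ω)) / (1 - e (X ω)))) * (1 - e (X ω)) * min (Y0 ω - η) 0) + (((1 / α * ((1 - π (X ω)) / (1 - e (X ω)))) * μ0c (X ω)) * (1 - e (X ω)) - ((1 / α * ((1 - π (X ω)) / (1 - e (X ω)))) * μ0c (X ω)) * (1 - A ω)))) P :=
    hd0a.add hd0b
  have hD1int : Integrable (fun ω => (((1 / α * (π (X ω) / e (X ω))) * A ω * min (Y1 ω - η) 0 - (1 / α * (π (X ω) / e (X ω))) * e (X ω) * min (Y1 ω - η) 0) + (((1 / α * (π (X ω) / e (X ω))) * μ1c (X ω)) * e (X ω) - ((1 / α * (π (X ω) / e (X ω))) * μ1c (X ω)) * A ω))) P :=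
    hd1a.add hd1b
  have h1 : ∫ ω, ((1 / α) * ((1 - π (X ω)) * μ0c (X ω) + π (X ω) * μ1c (X ω)) + η
        + (1 / α) * ((1 - π (X ω)) * (1 - A ω) / (1 - e (X ω)))
            * (min ((A ω * Y1 ω + (1 - A ω) * Y0 ω) - η) 0 - μ0c (X ω))
        + (1 / α) * (π (X ω) * A ω / e (X ω))
            * (min ((A ω * Y1 ω + (1 - A ω) * Y0 ω) - η) 0 - μ1c (X ω))) ∂P
      = ∫ ω, ((1 / α * min ((π (X ω) * Y1 ω + (1 - π (X ω)) * Y0 ω) - η) 0 + η) + ((((1 / α * ((1 - π (X ω)) / (1 - e (X ω)))) * (1 - A ω) * min (Y0 ω - η) 0 - (1 / α * ((1 - π (X ω)) / (1 - e (X ω)))) * (1 - e (X ω)) * min (Y0 ω - η) 0) + (((1 / α * ((1 - π (X ω)) / (1 - e (X ω)))) * μ0c (X ω)) * (1 - e (X ω)) - ((1 / α * ((1 - π (X ω)) / (1 - e (X ω)))) * μ0c (X ω)) * (1 - A ω))) + (((1 / α * (π (X ω) / e (X ω))) * A ω * min (Y1 ω - η) 0 - (1 / α * (π (X ω) / e (X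 ω))) * e (X ω) * min (Y1 ω - η) 0) + (((1 / α * (π (X ω) / e (X ω))) * μ1c (X ω)) * e (X ω) - ((1 / α * (π (X ω) / e (X ω))) * μ1c (X ω)) * A ω)))) ∂P :=
    integral_congr_ae (Filter.Eventually.of_forall key_pt)
  have h2 : ∫ ω, ((1 / α * min ((π (X ω) * Y1 ω + (1 - π (X ω)) * Y0 ω) - η) 0 + η) + ((((1 / α * ((1 - π (X ω)) / (1 - e (X ω)))) * (1 - A ω) * min (Y0 ω - η) 0 - (1 / α * ((1 - π (X ω)) / (1 - e (X ω)))) * (1 - e (X ω)) * min (Y0 ω - η) 0) + (((1 / α * ((1 - π (X ω)) / (1 - e (X ω)))) * μ0c (X ω)) * (1 - e (X ω)) - ((1 / α * ((1 - π (X ω)) / (1 - e (X ω)))) * μ0c (X ω)) * (1 - A ω))) + (((1 / α * (π (X ω) / e (X ω))) * A ω * min (Y1 ω - η) 0 - (1 / α * (π (X ω) / e (X ω))) * e (X ω) * min (Y1 ω - η) 0) + (((1 / α * (π (X ω) / e (X ω))) * μ1c (X ω)) * e (X ω) - ((1 / α * (π (X ω) / e (X ω))) * μ1c (X ω)) * A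 ω)))) ∂P
      = (∫ ω, (1 / α * min ((π (X ω) * Y1 ω + (1 - π (X ω)) * Y0 ω) - η) 0 + η) ∂P) + ∫ ω, ((((1 / α * ((1 - π (X ω)) / (1 - e (X ω)))) * (1 - A ω) * min (Y0 ω - η) 0 - (1 / α * ((1 - π (X ω)) / (1 - e (X ω)))) * (1 - e (X ω)) * min (Y0 ω - η) 0) + (((1 / α * ((1 - π (X ω)) / (1 - e (X ω)))) * μ0c (X ω)) * (1 - e (X ω)) - ((1 / α * ((1 - π (X ω)) / (1 - e (X ω)))) * μ0c (X ω)) * (1 - A ω))) + (((1 / α * (π (X ω) / e (X ω))) * A ω * min (Y1 ω - η) 0 - (1 / α * (π (X ω) / e (X ω))) * e (X ω) * min (Y1 ω - η) 0) + (((1 / α * (π (X ω) / e (X ω))) * μ1c (X ω)) * e (X ω) - ((1 / α * (π (X ω) / e (X ω))) * μ1c (X ω)) * A ω))) ∂P :=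
    integral_add hGint (hD0int.add hD1int)
  have h3 : ∫ ω, ((((1 / α * ((1 - π (X ω)) / (1 - e (X ω)))) * (1 - A ω) * min (Y0 ω - η) 0 - (1 / α * ((1 - π (X ω)) / (1 - e (X ω)))) * (1 - e (X ω)) * min (Y0 ω - η) 0) + (((1 / α * ((1 - π (X ω)) / (1 - e (X ω)))) * μ0c (X ω)) * (1 - e (X ω)) - ((1 / α * ((1 - π (X ω)) / (1 - e (X ω)))) * μ0c (X ω)) * (1 - A ω))) + (((1 / α * (π (X ω) / e (X ω))) * A ω * min (Y1 ω - η) 0 - (1 / α * (π (X ω) / e (X ω))) * e (X ω) * min (Y1 ω - η) 0) + (((1 / α * (π (X ω) / e (X ω))) * μ1c (X ω)) * e (X ω) - ((1 / α * (π (X ω) / e (X ω))) * μ1c (X ω)) * A ω))) ∂P = 0 := by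
    rw [integral_add hD0int hD1int]
    have hz0 : ∫ ω, (((1 / α * ((1 - π (X ω)) / (1 - e (X ω)))) * (1 - A ω) * min (Y0 ω - η) 0 - (1 / α * ((1 - π (X ω)) / (1 - e (X ω)))) * (1 - e (X ω)) * min (Y0 ω - η) 0) + (((1 / α * ((1 - π (X ω)) / (1 - e (X ω)))) * μ0c (X ω)) * (1 - e (X ω)) - ((1 / α * ((1 - π (X ω)) / (1 - e (X ω)))) * μ0c (X ω)) * (1 - A ω))) ∂P = 0 := by
      rw [integral_add hd0a hd0b,
        integral_sub hu0i hu0pi, integral_sub hv0pi hv0i, hu0eq, ← hv0eq]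
      ring
    have hz1 : ∫ ω, (((1 / α * (π (X ω) / e (X ω))) * A ω * min (Y1 ω - η) 0 - (1 / α * (π (X ω) / e (X ω))) * e (X ω) * min (Y1 ω - η) 0) + (((1 / α * (π (X ω) / e (X ω))) * μ1c (X ω)) * e (X ω) - ((1 / α * (π (X ω) / e (X ω))) * μ1c (X ω)) * A ω)) ∂P = 0 := by
      rw [integral_add hd1a hd1b,
        integral_sub hu1i hu1pi, integral_sub hv1pi hv1i, hu1eq, ← hv1eq]
      ring
    rw [hz0, hz1]; ring
  have h4 : ∫ ω, (1 / α * min ((π (X ω) * Y1 ω + (1 - π (X ω)) * Y0 ω) - η) 0 + η) ∂P = (1 / α) * (∫ ω, min ((π (X ω) * Y1 ω + (1 - π (X ω)) * Y0 ω) - η) 0 ∂P) + η := by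
    rw [integral_add (hRint.const_mul (1 / α)) (integrable_const η),
      integral_const_mul, integral_const, probReal_univ]
    simp
  rw [h1, h2, h3, h4, add_zero]

set_option maxHeartbeats 1000000 in
/-- **Double robustness of the score with respect to the outcome regressions (Section 3).**
Fix `α ∈ (0,1]`, `η ∈ ℝ`, a `{0,1}`-valued policy `π`, and arbitrary bounded measurable
functions `μ̌₀, μ̌₁`. With the true propensity score `e` (strong overlap, version of
`E[A | σ(X)]`), the doubly robust score
`g = (1/α)[(1−π(X))μ̌₀(X) + π(X)μ̌₁(X)] + η
   + (1/α)[(1−π(X))(1−A)/(1−e(X))]((Y−η)₋ − μ̌₀(X))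
   + (1/α)[π(X)A/e(X)]((Y−η)₋ − μ̌₁(X))`
satisfies `E[g] = (1/α)·E[(Y(π) − η)₋] + η` under unconfoundedness. -/
theorem doubly_robust_score_in_outcome_regressions
    {Ω 𝒳 : Type*} [mΩ : MeasurableSpace Ω] [StandardBorelSpace Ω] [Nonempty Ω]
    [m𝒳 : MeasurableSpace 𝒳]
    (P : Measure Ω) [IsProbabilityMeasure P]
    (X : Ω → 𝒳) (hX : Measurable X)
    (Y0 Y1 A : Ω → ℝ) (hY0 : Integrable Y0 P) (hY1 : Integrable Y1 P)
    (hA : Measurable A) (hA01 : ∀ ω, A ω = 0 ∨ A ω = 1)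
    (hUnconf : ProbabilityTheory.CondIndepFun (m𝒳.comap X)
      (measurable_iff_comap_le.mp hX) (fun ω => (Y0 ω, Y1 ω)) A P)
    (κ : ℝ) (hκ0 : 0 < κ) (hκhalf : κ < 1 / 2)
    (e : 𝒳 → ℝ) (he : Measurable e) (hebound : ∀ x, κ ≤ e x ∧ e x ≤ 1 - κ)
    (hever : (fun ω => e (X ω)) =ᵐ[P] P[A | m𝒳.comap X])
    (α : ℝ) (hα0 : 0 < α) (hα1 : α ≤ 1) (η : ℝ)
    (π : 𝒳 → ℝ) (hπ : Measurable π) (hπ01 : ∀ x, π x = 0 ∨ π x = 1)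
    (μ0c μ1c : 𝒳 → ℝ) (hμ0c : Measurable μ0c) (hμ1c : Measurable μ1c)
    (hμ0cbdd : ∃ C : ℝ, ∀ x, |μ0c x| ≤ C) (hμ1cbdd : ∃ C : ℝ, ∀ x, |μ1c x| ≤ C) :
    ∫ ω, ((1 / α) * ((1 - π (X ω)) * μ0c (X ω) + π (X ω) * μ1c (X ω)) + η
        + (1 / α) * ((1 - π (X ω)) * (1 - A ω) / (1 - e (X ω)))
            * (min ((A ω * Y1 ω + (1 - A ω) * Y0 ω) - η) 0 - μ0c (X ω))
        + (1 / α) * (π (X ω) * A ω / e (X ω))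
            * (min ((A ω * Y1 ω + (1 - A ω) * Y0 ω) - η) 0 - μ1c (X ω))) ∂P
      = (1 / α) * (∫ ω, min ((π (X ω) * Y1 ω + (1 - π (X ω)) * Y0 ω) - η) 0 ∂P) + η := by

  have hm : m𝒳.comap X ≤ mΩ := measurable_iff_comap_le.mp hX
  -- measurable representatives of Y0 and Y1
  set Y0' : Ω → ℝ := (hY0.aestronglyMeasurable.mk Y0) with hY0'def
  set Y1' : Ω → ℝ := (hY1.aestronglyMeasurable.mk Y1) with hY1'def
  have hY0'm : Measurable Y0' := hY0.aestronglyMeasurable.stronglyMeasurable_mk.measurable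
  have hY1'm : Measurable Y1' := hY1.aestronglyMeasurable.stronglyMeasurable_mk.measurable
  have hY0'ae : Y0 =ᵐ[P] Y0' := hY0.aestronglyMeasurable.ae_eq_mk
  have hY1'ae : Y1 =ᵐ[P] Y1' := hY1.aestronglyMeasurable.ae_eq_mk
  have hY0'int : Integrable Y0' P := hY0.congr hY0'ae
  have hY1'int : Integrable Y1' P := hY1.congr hY1'ae
  -- transfer of the conditional independence along a.e. equality
  obtain ⟨N, hsubN, hNm, hN0⟩ :=
    exists_measurable_superset_of_null (ae_iff.mp (hY0'ae.and hY1'ae))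
  have hcond0 : (P⟦N | m𝒳.comap X⟧) =ᵐ[P] 0 := by
    have hind0 : (Set.indicator N fun _ => (1:ℝ)) =ᵐ[P] 0 := by
      have hNc : ∀ᵐ ω ∂P, ω ∉ N := by
        rw [ae_iff]; simpa using hN0
      filter_upwards [hNc] with ω hω
      simp [Set.indicator_of_notMem hω]
    calc (P⟦N | m𝒳.comap X⟧) =ᵐ[P] P[(0 : Ω → ℝ) | m𝒳.comap X] := condExp_congr_ae hind0
      _ = 0 := condExp_zero
  have hker0 : ∀ᵐ ω ∂P, ProbabilityTheory.condExpKernel P (m𝒳.comap X) ω N = 0 := by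
    have htoReal := ProbabilityTheory.condExpKernel_ae_eq_condExp hm hNm (μ := P)
    filter_upwards [htoReal, hcond0] with ω h1 h2
    have h3 : (ProbabilityTheory.condExpKernel P (m𝒳.comap X) ω N).toReal = 0 := by
      rw [← measureReal_def, h1, h2]; rfl
    have h4 : ProbabilityTheory.condExpKernel P (m𝒳.comap X) ω N ≠ ⊤ := measure_ne_top _ _
    exact (ENNReal.toReal_eq_zero_iff _).mp h3 |>.resolve_right h4
  have htrim : ∀ᵐ ω ∂(P.trim hm),
      ProbabilityTheory.condExpKernel P (m𝒳.comap X) ω N = 0 := by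
    rw [ae_iff]
    have hsetm : MeasurableSet[m𝒳.comap X]
        {ω | ¬ ProbabilityTheory.condExpKernel P (m𝒳.comap X) ω N = 0} := by
      have := (ProbabilityTheory.measurable_condExpKernel (μ := P) (m := m𝒳.comap X) hNm)
        (measurableSet_singleton (0 : ℝ≥0∞))
      exact this.compl
    rw [trim_measurableSet_eq hm hsetm]
    exact ae_iff.mp hker0
  have hWae : ∀ᵐ ω ∂(P.trim hm),
      (fun ω' => (Y0 ω', Y1 ω')) =ᵐ[ProbabilityTheory.condExpKernel P (m𝒳.comap X) ω]
        (fun ω' => (Y0' ω', Y1' ω')) := by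
    filter_upwards [htrim] with ω hω
    rw [Filter.EventuallyEq, ae_iff]
    refine measure_mono_null ?_ hω
    intro ω' hω'
    refine hsubN ?_
    simp only [Set.mem_setOf_eq] at hω' ⊢
    intro hc
    exact hω' (by rw [hc.1, hc.2])
  have hAae : ∀ᵐ ω ∂(P.trim hm),
      A =ᵐ[ProbabilityTheory.condExpKernel P (m𝒳.comap X) ω] A :=
    Filter.Eventually.of_forall fun _ => Filter.EventuallyEq.rfl
  have hUnconf' : ProbabilityTheory.CondIndepFun (m𝒳.comap X) hm
      (fun ω => (Y0' ω, Y1' ω)) A P :=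
    ProbabilityTheory.Kernel.IndepFun.congr' hUnconf hWae hAae
  -- rewrite both sides using the a.e. equalities
  have hL : ∫ ω, ((1 / α) * ((1 - π (X ω)) * μ0c (X ω) + π (X ω) * μ1c (X ω)) + η
        + (1 / α) * ((1 - π (X ω)) * (1 - A ω) / (1 - e (X ω)))
            * (min ((A ω * Y1 ω + (1 - A ω) * Y0 ω) - η) 0 - μ0c (X ω))
        + (1 / α) * (π (X ω) * A ω / e (X ω))
            * (min ((A ω * Y1 ω + (1 - A ω) * Y0 ω) - η) 0 - μ1c (X ω))) ∂P
      = ∫ ω, ((1 / α) * ((1 - π (X ω)) * μ0c (X ω) + π (X ω) * μ1c (X ω)) + η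
        + (1 / α) * ((1 - π (X ω)) * (1 - A ω) / (1 - e (X ω)))
            * (min ((A ω * Y1' ω + (1 - A ω) * Y0' ω) - η) 0 - μ0c (X ω))
        + (1 / α) * (π (X ω) * A ω / e (X ω))
            * (min ((A ω * Y1' ω + (1 - A ω) * Y0' ω) - η) 0 - μ1c (X ω))) ∂P := by
    refine integral_congr_ae ?_
    filter_upwards [hY0'ae, hY1'ae] with ω h0 h1
    rw [h0, h1]
  have hR : ∫ ω, min ((π (X ω) * Y1 ω + (1 - π (X ω)) * Y0 ω) - η) 0 ∂P
      = ∫ ω, min ((π (X ω) * Y1' ω + (1 - π (X ω)) * Y0' ω) - η) 0 ∂P := by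
    refine integral_congr_ae ?_
    filter_upwards [hY0'ae, hY1'ae] with ω h0 h1
    rw [h0, h1]
  rw [hL, hR]
  exact main_meas P X hX Y0' Y1' A hY0'm hY1'm hY0'int hY1'int hA hA01 hUnconf' κ hκ0 hκhalf
    e he hebound hever α hα0 η π hπ hπ01 μ0c μ1c hμ0c hμ1c hμ0cbdd hμ1cbdd
end

section
/- (Extended Gini welfare as a weighted average of α-expected welfares, the Fubini identity underlying equation (7)) For every real k > 2, (k − 2)·∫₀¹ ( ∫₀^α q(t) dt )·(1 − α)^{k−3} dα = ∫₀¹ q(t)·(1 − t)^{k−2} dt; equivalently, with W_α = (1/α)·∫₀^α q(t) dt, one has ∫₀¹ q(t)·(1 − t)^{k−2} dt = (k − 2)·∫₀¹ W_α · α · (1 − α)^{k−3} dα. -/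
open MeasureTheory

theorem main_identity
    (q : ℝ → ℝ) (hq : IntegrableOn q (Set.Ioo 0 1) MeasureTheory.volume)
    (k : ℝ) (hk : 2 < k) :
    (k - 2) * ∫ α in (0:ℝ)..1, (∫ t in (0:ℝ)..α, q t) * (1 - α) ^ (k - 3)
      = ∫ t in (0:ℝ)..1, q t * (1 - t) ^ (k - 2) := by
  open Set in
  set w : ℝ → ℝ := fun α => (1 - α) ^ (k - 3) with hw
  set μ : Measure ℝ := volume.restrict (Ioo 0 1) with hμ
  have hwi : IntegrableOn w (Ioo (0:ℝ) 1) volume := by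
    have h1 : IntervalIntegrable (fun x : ℝ => x ^ (k-3)) volume 0 1 :=
      intervalIntegral.intervalIntegrable_rpow' (by linarith)
    have h2 : IntervalIntegrable w volume 0 1 := by
      have := h1.comp_sub_left 1
      simpa [hw] using this.symm
    exact (intervalIntegrable_iff_integrableOn_Ioo_of_le (by norm_num)).mp h2
  set f : ℝ → ℝ → ℝ := fun α t => (Ioo (0:ℝ) α).indicator q t * w α with hf
  have hS : MeasurableSet {p : ℝ × ℝ | p.2 ∈ Ioo 0 p.1} := by
    apply MeasurableSet.inter
    · exact measurableSet_lt measurable_const measurable_snd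
    · exact measurableSet_lt measurable_snd measurable_fst
  have huncurry : ∀ p : ℝ × ℝ, Function.uncurry f p =
      ({p : ℝ × ℝ | p.2 ∈ Ioo 0 p.1}).indicator (fun p => q p.2) p * w p.1 := by
    intro p
    have hmem : p ∈ {p : ℝ × ℝ | p.2 ∈ Ioo 0 p.1} ↔ p.2 ∈ Ioo 0 p.1 := Iff.rfl
    show f p.1 p.2 = _
    simp only [hf]
    by_cases h : p.2 ∈ Ioo 0 p.1
    · rw [Set.indicator_of_mem (hmem.mpr h), Set.indicator_of_mem h]
    · rw [Set.indicator_of_notMem (fun hc => h (hmem.mp hc)), Set.indicator_of_notMem h]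
  have hmeas : AEStronglyMeasurable (Function.uncurry f) (μ.prod μ) := by
    have h1 : AEStronglyMeasurable (fun p : ℝ × ℝ => q p.2) (μ.prod μ) := hq.1.comp_snd
    have h2 := (h1.indicator hS).mul
      ((by fun_prop : Measurable (fun p : ℝ × ℝ => w p.1)).aestronglyMeasurable)
    exact h2.congr (by filter_upwards with p using (huncurry p).symm)
  have hInt : Integrable (Function.uncurry f) (μ.prod μ) := by
    rw [integrable_prod_iff hmeas]
    constructor
    · filter_upwards with α
      exact (hq.indicator measurableSet_Ioo).mul_const (w α)
    · have hbound : Integrable (fun α => ‖w α‖ * ∫ t, ‖q t‖ ∂μ) μ :=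
        hwi.norm.mul_const _
      apply hbound.mono ((hmeas.norm).integral_prod_right')
      filter_upwards with α
      show ‖∫ t, ‖f α t‖ ∂μ‖ ≤ ‖‖w α‖ * ∫ t, ‖q t‖ ∂μ‖
      have h1 : ∫ t, ‖f α t‖ ∂μ = (∫ t, ‖(Ioo (0:ℝ) α).indicator q t‖ ∂μ) * ‖w α‖ := by
        simp_rw [hf, norm_mul]
        exact integral_mul_const _ _
      have h2 : (∫ t, ‖(Ioo (0:ℝ) α).indicator q t‖ ∂μ) ≤ ∫ t, ‖q t‖ ∂μ := by
        apply integral_mono_of_nonneg (by filter_upwards with t using norm_nonneg _)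
          hq.norm
        filter_upwards with t
        exact norm_indicator_le_norm_self q t
      have h3 : (0:ℝ) ≤ ∫ t, ‖f α t‖ ∂μ :=
        integral_nonneg fun t => norm_nonneg _
      rw [Real.norm_of_nonneg h3, h1, Real.norm_of_nonneg (by positivity :
        (0:ℝ) ≤ ‖w α‖ * ∫ t, ‖q t‖ ∂μ)]
      calc (∫ t, ‖(Ioo (0:ℝ) α).indicator q t‖ ∂μ) * ‖w α‖
          ≤ (∫ t, ‖q t‖ ∂μ) * ‖w α‖ := by
            apply mul_le_mul_of_nonneg_right h2 (norm_nonneg _)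
        _ = ‖w α‖ * ∫ t, ‖q t‖ ∂μ := mul_comm _ _
  have hswap := integral_integral_swap hInt
  -- LHS: inner integral
  have hLHSin : ∀ α ∈ Ioo (0:ℝ) 1, (∫ t, f α t ∂μ) = (∫ t in (0:ℝ)..α, q t) * w α := by
    intro α hα
    rw [intervalIntegral.integral_of_le hα.1.le, integral_Ioc_eq_integral_Ioo]
    have : (∫ t, f α t ∂μ) = (∫ t, (Ioo (0:ℝ) α).indicator q t ∂μ) * w α :=
      integral_mul_const _ _
    rw [this, integral_indicator measurableSet_Ioo, hμ,
      Measure.restrict_restrict measurableSet_Ioo,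
      inter_eq_self_of_subset_left (Ioo_subset_Ioo le_rfl hα.2.le)]
  -- RHS: inner integral
  have hrint : ∀ t ∈ Ioo (0:ℝ) 1, (∫ α in t..(1:ℝ), w α) = (1 - t) ^ (k-2) / (k-2) := by
    intro t ht
    have : (∫ α in t..(1:ℝ), w α) = ∫ x in (1-(1:ℝ))..(1-t), x ^ (k-3) := by
      rw [hw]
      exact intervalIntegral.integral_comp_sub_left (fun x => x ^ (k-3)) 1
    rw [this]
    simp only [sub_self]
    rw [integral_rpow (Or.inl (by linarith))]
    rw [Real.zero_rpow (by linarith : k - 3 + 1 ≠ 0)]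
    ring_nf
  have hRHSin : ∀ t ∈ Ioo (0:ℝ) 1, (∫ α, f α t ∂μ) = q t * ((1-t)^(k-2) / (k-2)) := by
    intro t ht
    have heq : ∀ α : ℝ, f α t = (Ioi t).indicator (fun α => q t * w α) α := by
      intro α
      simp only [hf, Set.indicator, mem_Ioo, mem_Ioi]
      by_cases h : t < α
      · simp [h, ht.1]
      · simp [h]
    calc (∫ α, f α t ∂μ) = ∫ α, (Ioi t).indicator (fun α => q t * w α) α ∂μ := by
          simp_rw [heq]
      _ = ∫ α in Ioo t 1, q t * w α := by
          rw [integral_indicator measurableSet_Ioi, hμ,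
            Measure.restrict_restrict measurableSet_Ioi]
          have hset : Ioi t ∩ Ioo 0 1 = Ioo t 1 := by
            ext x
            simp only [mem_inter_iff, mem_Ioi, mem_Ioo]
            constructor
            · rintro ⟨h1, _, h3⟩; exact ⟨h1, h3⟩
            · rintro ⟨h1, h2⟩; exact ⟨h1, ht.1.trans h1, h2⟩
          rw [hset]
      _ = q t * ∫ α in Ioo t 1, w α := integral_const_mul _ _
      _ = q t * ∫ α in t..(1:ℝ), w α := by
          rw [intervalIntegral.integral_of_le ht.2.le, integral_Ioc_eq_integral_Ioo]
      _ = q t * ((1-t)^(k-2) / (k-2)) := by rw [hrint t ht]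
  -- assemble
  have hL : (∫ α in (0:ℝ)..1, (∫ t in (0:ℝ)..α, q t) * w α) = ∫ α, ∫ t, f α t ∂μ ∂μ := by
    rw [intervalIntegral.integral_of_le (by norm_num), integral_Ioc_eq_integral_Ioo]
    exact setIntegral_congr_fun measurableSet_Ioo (fun α hα => (hLHSin α hα).symm)
  have hR : (∫ t, ∫ α, f α t ∂μ ∂μ) = ∫ t in Ioo (0:ℝ) 1, q t * ((1-t)^(k-2)/(k-2)) :=
    setIntegral_congr_fun measurableSet_Ioo (fun t ht => hRHSin t ht)
  have hfin : (∫ t in (0:ℝ)..1, q t * (1 - t) ^ (k - 2))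
      = ∫ t in Ioo (0:ℝ) 1, q t * (1-t)^(k-2) := by
    rw [intervalIntegral.integral_of_le (by norm_num), integral_Ioc_eq_integral_Ioo]
  rw [hL, hswap, hR, hfin]
  have : (∫ t in Ioo (0:ℝ) 1, q t * ((1-t)^(k-2)/(k-2)))
      = (∫ t in Ioo (0:ℝ) 1, q t * (1-t)^(k-2)) / (k-2) := by
    simp_rw [← mul_div_assoc]
    exact integral_div _ _
  rw [this]
  have hk2 : k - 2 ≠ 0 := by linarith
  field_simp


/-- **Extended Gini welfare as a weighted average of `α`-expected welfares**
(the Fubini identity underlying equation (7)). For `q` Lebesgue-integrable on `(0,1)`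
and `k > 2`:
`(k − 2)·∫₀¹ (∫₀^α q(t) dt)·(1 − α)^{k−3} dα = ∫₀¹ q(t)·(1 − t)^{k−2} dt`;
equivalently, with `W_α = (1/α)·∫₀^α q(t) dt`,
`∫₀¹ q(t)·(1 − t)^{k−2} dt = (k − 2)·∫₀¹ W_α·α·(1 − α)^{k−3} dα`. -/
theorem extended_gini_fubini_identity
    (q : ℝ → ℝ) (hq : IntegrableOn q (Set.Ioo 0 1) MeasureTheory.volume)
    (k : ℝ) (hk : 2 < k) :
    (k - 2) * ∫ α in (0:ℝ)..1, (∫ t in (0:ℝ)..α, q t) * (1 - α) ^ (k - 3)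
      = ∫ t in (0:ℝ)..1, q t * (1 - t) ^ (k - 2) ∧
    ∫ t in (0:ℝ)..1, q t * (1 - t) ^ (k - 2)
      = (k - 2) * ∫ α in (0:ℝ)..1,
          ((1 / α) * ∫ t in (0:ℝ)..α, q t) * α * (1 - α) ^ (k - 3) := by
  have h1 := main_identity q hq k hk
  refine ⟨h1, ?_⟩
  rw [← h1]
  congr 1
  apply intervalIntegral.integral_congr
  intro α hα
  by_cases h : α = 0
  · subst h
    simp
  · field_simp
end

section
/- (Lemma A.1, first-best α-EWM policy) Suppose χ₀ and χ₁ are continuous on B. Then there exists η* ∈ B such that the threshold policy π*(x) = 1{τ(x, η*) ≥ 0} satisfies J(π*, η*) = sup_π sup_{η ∈ B} J(π, η), where the outer supremum is taken over all measurable policies π : 𝒳 → ℝ with values in {0,1}; in particular, sup_{η ∈ B} J(π*, η) equals this double supremum, i.e., π* maximizes the α-expected welfare over all policies. -/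
/-!
A policy mixes the two potential outcomes pointwise, so its welfare at `η` is bounded by the
integral of `max μ₁ μ₀`, which the threshold policy `1{τ ≥ 0}` attains. The bound
`W(η) = (1/α) ∫ max μ₁ μ₀ + η = (1/α) (χ₁ + χ₀) + η` is continuous on the compact set `B`,
so it attains its maximum at some `η*`, and the threshold policy at `η*` is then optimal.
-/

open MeasureTheory

section PolicyWelfare

variable {X : Type*} [MeasurableSpace X] {ν : Measure X} {f g : X → ℝ}

lemma mix_le_max_of_eq_zero_or_eq_one {p a b : ℝ} (hp : p = 0 ∨ p = 1) :
    p * a + (1 - p) * b ≤ max a b := by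
  rcases hp with rfl | rfl <;> simp

lemma integrable_policy_mix {π : X → ℝ} (hπ : Measurable π) (hπ01 : ∀ x, π x = 0 ∨ π x = 1)
    (hf : Integrable f ν) (hg : Integrable g ν) :
    Integrable (fun x => π x * f x + (1 - π x) * g x) ν := by
  have hπ_le : ∀ x, ‖π x‖ ≤ 1 := fun x => by rcases hπ01 x with h | h <;> simp [h]
  have hπ'_le : ∀ x, ‖1 - π x‖ ≤ 1 := fun x => by rcases hπ01 x with h | h <;> simp [h]
  exact (hf.bdd_mul hπ.aestronglyMeasurable (ae_of_all _ hπ_le)).add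
    (hg.bdd_mul (measurable_const.sub hπ).aestronglyMeasurable (ae_of_all _ hπ'_le))

lemma integral_policy_mix_le_integral_max {π : X → ℝ} (hπ : Measurable π)
    (hπ01 : ∀ x, π x = 0 ∨ π x = 1) (hf : Integrable f ν) (hg : Integrable g ν) :
    ∫ x, (π x * f x + (1 - π x) * g x) ∂ν ≤ ∫ x, max (f x) (g x) ∂ν :=
  integral_mono (integrable_policy_mix hπ hπ01 hf hg) (hf.sup hg)
    fun x => mix_le_max_of_eq_zero_or_eq_one (hπ01 x)

lemma measurable_threshold (hf : Measurable f) (hg : Measurable g) :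
    Measurable fun x => if 0 ≤ f x - g x then (1 : ℝ) else 0 :=
  Measurable.ite (measurableSet_le measurable_const (hf.sub hg)) measurable_const measurable_const

lemma integral_threshold_mix_eq_integral_max :
    ∫ x, ((if 0 ≤ f x - g x then (1 : ℝ) else 0) * f x
      + (1 - (if 0 ≤ f x - g x then (1 : ℝ) else 0)) * g x) ∂ν = ∫ x, max (f x) (g x) ∂ν := by
  congr 1
  ext x
  split_ifs with h
  · simp [max_eq_left (sub_nonneg.mp h)]
  · simp [max_eq_right (by linarith : f x ≤ g x)]

lemma integral_max_eq_add_integral_ite (hf : Measurable f) (hg : Measurable g)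
    (hfi : Integrable f ν) (hgi : Integrable g ν) :
    ∫ x, max (f x) (g x) ∂ν =
      ∫ x, (if 0 ≤ f x - g x then f x else 0) ∂ν + ∫ x, (if f x - g x < 0 then g x else 0) ∂ν := by
  have hf' : Integrable (fun x => if 0 ≤ f x - g x then f x else 0) ν :=
    hfi.indicator (measurableSet_le measurable_const (hf.sub hg))
  have hg' : Integrable (fun x => if f x - g x < 0 then g x else 0) ν :=
    hgi.indicator (measurableSet_lt (hf.sub hg) measurable_const)
  rw [← integral_add hf' hg']
  congr 1
  ext x
  rcases le_or_gt 0 (f x - g x) with h | h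
  · simp [h, not_lt.mpr h, max_eq_left (sub_nonneg.mp h)]
  · simp [h, not_le.mpr h, max_eq_right (by linarith : f x ≤ g x)]

end PolicyWelfare

theorem first_best_policy_general
    {𝒳 : Type*} [MeasurableSpace 𝒳] (ν : Measure 𝒳)
    (α : ℝ) (hα0 : 0 < α)
    (B : Set ℝ) (hBcompact : IsCompact B) (hBne : B.Nonempty)
    (μ0 μ1 : 𝒳 → ℝ → ℝ)
    (hm0 : ∀ η ∈ B, Measurable (fun x => μ0 x η))
    (hm1 : ∀ η ∈ B, Measurable (fun x => μ1 x η))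
    (hi0 : ∀ η ∈ B, Integrable (fun x => μ0 x η) ν)
    (hi1 : ∀ η ∈ B, Integrable (fun x => μ1 x η) ν)
    (hχ1 : ContinuousOn
      (fun η => ∫ x, (if 0 ≤ μ1 x η - μ0 x η then μ1 x η else 0) ∂ν) B)
    (hχ0 : ContinuousOn
      (fun η => ∫ x, (if μ1 x η - μ0 x η < 0 then μ0 x η else 0) ∂ν) B) :
    ∃ ηs ∈ B,
      IsGreatest
        {v : ℝ | ∃ π : 𝒳 → ℝ, Measurable π ∧ (∀ x, π x = 0 ∨ π x = 1) ∧
          ∃ η ∈ B, v = (1 / α) * (∫ x, (π x * μ1 x η + (1 - π x) * μ0 x η) ∂ν) + η}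
        ((1 / α) * (∫ x, ((if 0 ≤ μ1 x ηs - μ0 x ηs then (1:ℝ) else 0) * μ1 x ηs
            + (1 - (if 0 ≤ μ1 x ηs - μ0 x ηs then (1:ℝ) else 0)) * μ0 x ηs) ∂ν) + ηs) := by
  set W : ℝ → ℝ := fun η => (1 / α) * ∫ x, max (μ1 x η) (μ0 x η) ∂ν + η
  have hW : ContinuousOn W B :=
    (((continuousOn_const (c := 1 / α)).mul (hχ1.add hχ0)).add continuousOn_id).congr
      fun η hη => by
        simp only [W, integral_max_eq_add_integral_ite (hm1 η hη) (hm0 η hη) (hi1 η hη) (hi0 η hη),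
          Pi.add_apply, Pi.mul_apply, id]
  obtain ⟨ηs, hηs, hmax⟩ := hBcompact.exists_isMaxOn hBne hW
  refine ⟨ηs, hηs, ⟨_, measurable_threshold (hm1 ηs hηs) (hm0 ηs hηs),
    fun x => by split_ifs <;> simp, ηs, hηs, rfl⟩, ?_⟩
  rintro v ⟨π, hπ, hπ01, η, hη, rfl⟩
  rw [integral_threshold_mix_eq_integral_max]
  calc (1 / α) * (∫ x, (π x * μ1 x η + (1 - π x) * μ0 x η) ∂ν) + η ≤ W η :=
        add_le_add_left (mul_le_mul_of_nonneg_left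
          (integral_policy_mix_le_integral_max hπ hπ01 (hi1 η hη) (hi0 η hη))
          (one_div_pos.mpr hα0).le) η
    _ ≤ W ηs := hmax hη

/-- **Lemma A.1 (first-best `α`-EWM policy).**
If `χ₀` and `χ₁` are continuous on the nonempty compact set `B`, then there exists
`η* ∈ B` such that the threshold policy `π*(x) = 1{τ(x, η*) ≥ 0}` attains the double
supremum of the dual welfare objective
`J(π, η) = (1/α)·∫ (π·μ₁(·,η) + (1 − π)·μ₀(·,η)) dν + η`
over all measurable `{0,1}`-valued policies `π` and `η ∈ B`; i.e. `J(π*, η*)` is the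
greatest value of `J` over this class, so `π*` maximizes the `α`-expected welfare. -/
theorem first_best_policy
    {𝒳 : Type*} [MeasurableSpace 𝒳] (ν : Measure 𝒳) [IsProbabilityMeasure ν]
    (α : ℝ) (hα0 : 0 < α) (hα1 : α ≤ 1)
    (B : Set ℝ) (hBcompact : IsCompact B) (hBne : B.Nonempty)
    (μ0 μ1 : 𝒳 → ℝ → ℝ)
    (hm0 : ∀ η ∈ B, Measurable (fun x => μ0 x η))
    (hm1 : ∀ η ∈ B, Measurable (fun x => μ1 x η))
    (hi0 : ∀ η ∈ B, Integrable (fun x => μ0 x η) ν)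
    (hi1 : ∀ η ∈ B, Integrable (fun x => μ1 x η) ν)
    (hχ1 : ContinuousOn
      (fun η => ∫ x, (if 0 ≤ μ1 x η - μ0 x η then μ1 x η else 0) ∂ν) B)
    (hχ0 : ContinuousOn
      (fun η => ∫ x, (if μ1 x η - μ0 x η < 0 then μ0 x η else 0) ∂ν) B) :
    ∃ ηs ∈ B,
      IsGreatest
        {v : ℝ | ∃ π : 𝒳 → ℝ, Measurable π ∧ (∀ x, π x = 0 ∨ π x = 1) ∧
          ∃ η ∈ B, v = (1 / α) * (∫ x, (π x * μ1 x η + (1 - π x) * μ0 x η) ∂ν) + η}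
        ((1 / α) * (∫ x, ((if 0 ≤ μ1 x ηs - μ0 x ηs then (1:ℝ) else 0) * μ1 x ηs
            + (1 - (if 0 ≤ μ1 x ηs - μ0 x ηs then (1:ℝ) else 0)) * μ0 x ηs) ∂ν) + ηs) :=
  first_best_policy_general ν α hα0 B hBcompact hBne μ0 μ1 hm0 hm1 hi0 hi1 hχ1 hχ0
end

section
/- (Lemma E.2: Hadamard directional differentiability of the supremum functional) Let h : Θ → ℝ be continuous, let h_n : Θ → ℝ be bounded functions converging to h uniformly on Θ, and let (t_n) be positive reals with t_n → 0. Then ( sup_{θ ∈ Θ} (V(θ) + t_n·h_n(θ)) − sup_{θ ∈ Θ} V(θ) ) / t_n → sup_{θ ∈ argmax V} h(θ) as n → ∞; that is, the supremum functional ψ(f) = sup_{θ ∈ Θ} f(θ) is Hadamard directionally differentiable at V tangentially to the continuous bounded functions, with derivative ψ'_V(h) = sup_{θ ∈ argmax V} h(θ). -/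
/-!
Let `M = sup V`, let `A = argmax V` and let `θ* ∈ A` realise `L = sup_A h`. Testing the
supremum at `θ*` gives `(sup (V + t hₙ) − M) / t ≥ hₙ(θ*) → L`. Conversely, for `c > L`
the compact set `{h ≥ c}` misses `A`, so `V ≤ M − η` there for some `η > 0`. Once
`hₙ < h + ε` and `t · sup hₙ` is small against `η`, this gives `V + t hₙ ≤ M + t (c + ε)`
everywhere, i.e. the quotient is at most `c + ε`.
-/

open Filter Set

section Perturbation

variable {Θ : Type*}

lemma add_mul_le_of_forall_lt_imp {V g : Θ → ℝ} {M B c η t : ℝ} (hVM : ∀ θ, V θ ≤ M)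
    (hgB : ∀ θ, g θ ≤ B) (hsep : ∀ θ, c < g θ → V θ + η ≤ M) (ht : 0 ≤ t)
    (htη : t * (B - c) ≤ η) (θ : Θ) :
    V θ + t * g θ ≤ M + t * c := by
  rcases le_or_gt (g θ) c with hc | hc
  · nlinarith [hVM θ]
  · nlinarith [hsep θ hc, hgB θ]

lemma iSup_add_mul_sub_div_le [Nonempty Θ] {V g : Θ → ℝ} {M B c η t : ℝ}
    (hVM : ∀ θ, V θ ≤ M) (hgB : ∀ θ, g θ ≤ B) (hsep : ∀ θ, c < g θ → V θ + η ≤ M)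
    (ht : 0 < t) (htη : t * (B - c) ≤ η) :
    ((⨆ θ, V θ + t * g θ) - M) / t ≤ c := by
  rw [div_le_iff₀ ht, sub_le_iff_le_add', mul_comm]
  exact ciSup_le (add_mul_le_of_forall_lt_imp hVM hgB hsep ht.le htη)

lemma le_iSup_add_mul_sub_div {V g : Θ → ℝ} {θ₀ : Θ} {B t : ℝ} (hθ₀ : ∀ θ, V θ ≤ V θ₀)
    (hgB : ∀ θ, g θ ≤ B) (ht : 0 < t) :
    g θ₀ ≤ ((⨆ θ, V θ + t * g θ) - V θ₀) / t := by
  have hbdd : BddAbove (range fun θ => V θ + t * g θ) :=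
    ⟨V θ₀ + t * B, forall_mem_range.2 fun θ => by nlinarith [hθ₀ θ, hgB θ]⟩
  rw [le_div_iff₀ ht, le_sub_iff_add_le', mul_comm]
  exact le_ciSup hbdd θ₀

end Perturbation

lemma TendstoUniformly.eventually_forall_lt_add {ι α : Type*} {p : Filter ι}
    {F : ι → α → ℝ} {f : α → ℝ} (hF : TendstoUniformly F f p) {ε : ℝ} (hε : 0 < ε) :
    ∀ᶠ n in p, ∀ x, F n x < f x + ε := by
  filter_upwards [Metric.tendstoUniformly_iff.1 hF ε hε] with n hn x
  linarith [(abs_sub_lt_iff.1 (hn x)).2, Real.dist_eq (f x) (F n x)]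

lemma isClosed_setOf_forall_le {Θ : Type*} [TopologicalSpace Θ] {V : Θ → ℝ}
    (hV : Continuous V) : IsClosed {θ | ∀ θ', V θ' ≤ V θ} := by
  rw [ofPred_forall]
  exact isClosed_iInter fun θ' => isClosed_le continuous_const hV

section Argmax

variable {Θ : Type*} [TopologicalSpace Θ] [CompactSpace Θ] {V : Θ → ℝ}

lemma exists_forall_le_and_sSup_image_eq [Nonempty Θ] (hV : Continuous V) {h : Θ → ℝ}
    (hh : Continuous h) :
    ∃ θ₀, (∀ θ, V θ ≤ V θ₀) ∧ sSup (h '' {θ | ∀ θ', V θ' ≤ V θ}) = h θ₀ := by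
  obtain ⟨θ₁, -, hθ₁⟩ := isCompact_univ.exists_isMaxOn univ_nonempty hV.continuousOn
  exact (isClosed_setOf_forall_le hV).isCompact.exists_sSup_image_eq
    ⟨θ₁, fun θ => hθ₁ (mem_univ θ)⟩ hh.continuousOn

lemma exists_pos_forall_le_imp_add_le (hV : Continuous V) {h : Θ → ℝ} (hh : Continuous h)
    {θ₀ : Θ} (hθ₀ : ∀ θ, V θ ≤ V θ₀) {c : ℝ} (hc : sSup (h '' {θ | ∀ θ', V θ' ≤ V θ}) < c) :
    ∃ η > 0, ∀ θ, c ≤ h θ → V θ + η ≤ V θ₀ := by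
  have hbdd : BddAbove (h '' {θ | ∀ θ', V θ' ≤ V θ}) :=
    (isClosed_setOf_forall_le hV).isCompact.bddAbove_image hh.continuousOn
  have hlt : ∀ θ ∈ {θ | c ≤ h θ}, 0 < V θ₀ - V θ := fun θ hθ => by
    by_contra! hle
    have hmax : ∀ θ', V θ' ≤ V θ := fun θ' => (hθ₀ θ').trans (by linarith)
    exact (hc.trans_le hθ).not_ge (le_csSup hbdd (mem_image_of_mem h hmax))
  obtain ⟨η, hη, hηle⟩ := (isClosed_le continuous_const hh).isCompact.exists_forall_le'
    (continuous_const.sub hV).continuousOn hlt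
  exact ⟨η, hη, fun θ hθ => by linarith [show η ≤ V θ₀ - V θ from hηle θ hθ]⟩

end Argmax

theorem sup_functional_hadamard_directional_derivative_general
    {Θ : Type*} [MetricSpace Θ] [CompactSpace Θ] [Nonempty Θ]
    (V : Θ → ℝ) (hV : Continuous V)
    (h : Θ → ℝ) (hh : Continuous h)
    (hseq : ℕ → Θ → ℝ)
    (hunif : TendstoUniformly hseq h atTop)
    (t : ℕ → ℝ) (htpos : ∀ n, 0 < t n) (ht0 : Tendsto t atTop (nhds 0)) :
    Tendsto (fun n => ((⨆ θ, (V θ + t n * hseq n θ)) - ⨆ θ, V θ) / t n)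
      atTop (nhds (sSup (h '' {θ | ∀ θ', V θ' ≤ V θ}))) := by
  obtain ⟨θ₀, hθ₀, hL⟩ := exists_forall_le_and_sSup_image_eq hV hh
  have hM : ⨆ θ, V θ = V θ₀ :=
    ciSup_eq_of_forall_le_of_forall_lt_exists_gt hθ₀ fun _ hw => ⟨θ₀, hw⟩
  obtain ⟨Ch, hCh⟩ := (isCompact_range hh).bddAbove
  have hbound : ∀ᶠ n in atTop, ∀ θ, hseq n θ < Ch + 1 := by
    filter_upwards [hunif.eventually_forall_lt_add one_pos] with n hn θ
    linarith [hn θ, hCh (mem_range_self θ)]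
  rw [hM, hL]
  refine tendsto_order.2 ⟨fun a ha => ?_, fun a ha => ?_⟩
  · filter_upwards [(hunif.tendsto_at θ₀).eventually (eventually_gt_nhds ha), hbound]
      with n hn hnB
    exact hn.trans_le (le_iSup_add_mul_sub_div hθ₀ (fun θ => (hnB θ).le) (htpos n))
  · obtain ⟨c₁, hLc₁, hc₁a⟩ := exists_between ha
    obtain ⟨c₂, hc₁, hc₂⟩ := exists_between hc₁a
    obtain ⟨η, hη, hsep⟩ := exists_pos_forall_le_imp_add_le hV hh hθ₀ (hL ▸ hLc₁)
    have hsmall : ∀ᶠ n in atTop, t n * (Ch + 1 - c₂) < η := by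
      have hlim := ht0.mul_const (Ch + 1 - c₂)
      rw [zero_mul] at hlim
      exact hlim.eventually (eventually_lt_nhds hη)
    filter_upwards [hunif.eventually_forall_lt_add (sub_pos.2 hc₁), hbound, hsmall]
      with n hnh hnB hnt
    refine (iSup_add_mul_sub_div_le hθ₀ (fun θ => (hnB θ).le) (fun θ hθ => ?_) (htpos n)
      hnt.le).trans_lt hc₂
    exact hsep θ (by linarith [hnh θ])

/-- **Lemma E.2: Hadamard directional differentiability of the supremum functional.**
On a compact metric space `Θ`, with `V` and `h` continuous, bounded `h_n` converging
uniformly to `h`, and positive `t_n → 0`,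
`(sup_Θ (V + t_n·h_n) − sup_Θ V) / t_n → sup_{argmax V} h`. -/
theorem sup_functional_hadamard_directional_derivative
    {Θ : Type*} [MetricSpace Θ] [CompactSpace Θ] [Nonempty Θ]
    (V : Θ → ℝ) (hV : Continuous V)
    (h : Θ → ℝ) (hh : Continuous h)
    (hseq : ℕ → Θ → ℝ) (hbdd : ∀ n, ∃ C : ℝ, ∀ θ, |hseq n θ| ≤ C)
    (hunif : TendstoUniformly hseq h atTop)
    (t : ℕ → ℝ) (htpos : ∀ n, 0 < t n) (ht0 : Tendsto t atTop (nhds 0)) :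
    Tendsto (fun n => ((⨆ θ, (V θ + t n * hseq n θ)) - ⨆ θ, V θ) / t n)
      atTop (nhds (sSup (h '' {θ | ∀ θ', V θ' ≤ V θ}))) :=
  sup_functional_hadamard_directional_derivative_general V hV h hh hseq hunif t htpos ht0
end

section
/- (Step in the proof of Lemma E.2: convergence of suprema over δ-argmax sets) For δ > 0 let Θ_δ = {θ ∈ Θ : V(θ) + δ > sup_{θ' ∈ Θ} V(θ')}. Then for every continuous h : Θ → ℝ, sup_{θ ∈ Θ_δ} h(θ) → sup_{θ ∈ argmax V} h(θ) as δ → 0⁺. -/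
open Filter

/-- **Step in the proof of Lemma E.2: convergence of suprema over `δ`-argmax sets.**
For `Θ_δ = {θ | V(θ) + δ > sup V}`, and any continuous `h`,
`sup_{Θ_δ} h → sup_{argmax V} h` as `δ → 0⁺`. -/
theorem sup_over_delta_argmax_tendsto
    {Θ : Type*} [MetricSpace Θ] [CompactSpace Θ] [Nonempty Θ]
    (V : Θ → ℝ) (hV : Continuous V)
    (h : Θ → ℝ) (hh : Continuous h) :
    Tendsto (fun δ : ℝ => sSup (h '' {θ | (⨆ θ', V θ') < V θ + δ}))
      (nhdsWithin 0 (Set.Ioi 0)) (nhds (sSup (h '' {θ | ∀ θ', V θ' ≤ V θ}))) := by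
  have hbh : BddAbove (Set.range h) := (isCompact_range hh).bddAbove
  have hbV : BddAbove (Set.range V) := (isCompact_range hV).bddAbove
  -- argmax nonempty
  obtain ⟨θ₀, _, hθ₀⟩ := isCompact_univ.exists_isMaxOn Set.univ_nonempty hV.continuousOn
  have hθ₀' : θ₀ ∈ {θ | ∀ θ', V θ' ≤ V θ} := fun θ' => hθ₀ (Set.mem_univ θ')
  set A : Set Θ := {θ | ∀ θ', V θ' ≤ V θ} with hA
  set M : ℝ := sSup (h '' A) with hM
  have hAne : A.Nonempty := ⟨θ₀, hθ₀'⟩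
  have hsub : ∀ δ : ℝ, 0 < δ → A ⊆ {θ | (⨆ θ', V θ') < V θ + δ} := by
    intro δ hδ θ hθ
    have : (⨆ θ', V θ') ≤ V θ := ciSup_le hθ
    exact lt_of_le_of_lt this (by linarith)
  have hbdd : ∀ δ : ℝ, BddAbove (h '' {θ | (⨆ θ', V θ') < V θ + δ}) :=
    fun δ => hbh.mono (Set.image_subset_range _ _)
  have hbddA : BddAbove (h '' A) := hbh.mono (Set.image_subset_range _ _)
  have hle : ∀ θ ∈ A, h θ ≤ M := fun θ hθ => le_csSup hbddA ⟨θ, hθ, rfl⟩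
  rw [tendsto_order]
  constructor
  · intro a ha
    filter_upwards [self_mem_nhdsWithin] with δ (hδ : δ ∈ Set.Ioi 0)
    have : M ≤ sSup (h '' {θ | (⨆ θ', V θ') < V θ + δ}) :=
      csSup_le_csSup (hbdd δ) (hAne.image h) (Set.image_mono (hsub δ hδ))
    exact lt_of_lt_of_le ha this
  · intro a ha
    -- open set U where h < (M+a)/2
    set c : ℝ := (M + a) / 2 with hc
    have hMc : M < c := by rw [hc]; linarith
    have hca : c < a := by rw [hc]; linarith
    set U : Set Θ := {θ | h θ < c} with hU
    have hUopen : IsOpen U := isOpen_lt hh continuous_const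
    have hAU : A ⊆ U := fun θ hθ => lt_of_le_of_lt (hle θ hθ) hMc
    -- find δ₀ > 0 such that Θ_δ ⊆ U for δ ≤ δ₀
    have key : ∃ δ₀ > 0, ∀ δ, 0 < δ → δ ≤ δ₀ → {θ | (⨆ θ', V θ') < V θ + δ} ⊆ U := by
      by_cases hK : Uᶜ = (∅ : Set Θ)
      · exact ⟨1, one_pos, fun δ _ _ θ _ => by
          by_contra hθ
          have : θ ∈ (∅ : Set Θ) := hK ▸ hθ
          exact this⟩
      · have hKne : (Uᶜ : Set Θ).Nonempty := Set.nonempty_iff_ne_empty.2 hK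
        have hKcomp : IsCompact (Uᶜ : Set Θ) := hUopen.isClosed_compl.isCompact
        obtain ⟨θ₁, hθ₁K, hθ₁max⟩ := hKcomp.exists_isMaxOn hKne hV.continuousOn
        have hθ₁V : V θ₁ < ⨆ θ', V θ' := by
          have hne : ¬ (∀ θ', V θ' ≤ V θ₁) := fun hcon => hθ₁K (hAU hcon)
          push_neg at hne
          obtain ⟨θ', hθ'⟩ := hne
          exact lt_of_lt_of_le hθ' (le_ciSup hbV θ')
        refine ⟨(⨆ θ', V θ') - V θ₁, by linarith, fun δ hδ hδle θ hθ => ?_⟩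
        by_contra hθU
        have h1 : V θ ≤ V θ₁ := hθ₁max hθU
        have h2 : (⨆ θ', V θ') < V θ + δ := hθ
        linarith
    obtain ⟨δ₀, hδ₀, hδ₀prop⟩ := key
    filter_upwards [Ioo_mem_nhdsGT_of_mem (Set.mem_Ico.2 ⟨le_refl 0, hδ₀⟩)]
      with δ hδ
    obtain ⟨hδ1, hδ2⟩ := hδ
    have hsubU := hδ₀prop δ hδ1 hδ2.le
    have : sSup (h '' {θ | (⨆ θ', V θ') < V θ + δ}) ≤ c :=
      csSup_le (Set.Nonempty.image h ⟨θ₀, hsub δ hδ1 hθ₀'⟩)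
        (fun x ⟨θ, hθ, hx⟩ => hx ▸ (hsubU hθ).le)
    exact lt_of_le_of_lt this hca
end
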